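/- arXiv:2301.11747 — 9 statements merged into one kernel-verified Lean document; each statement's English description precedes it below -/
import Mathlib

section
/- Let a : ℕ → ℤ be a nonzero sequence which is a linear recurrence sequence over ℤ, i.e. there exists a monic polynomial Q ∈ ℤ[X] with ∑_j (coefficient of X^j in Q)·a(n+j) = 0 for all n ≥ 1. Then there exists a unique monic polynomial P ∈ ℤ[X] such that for every Q ∈ ℤ[X], one has (∑_j (coefficient of X^j in Q)·a(n+j) = 0 for all n ≥ 1) if and only if P divides Q in ℤ[X]; in other words, the annihilator ideal A_ℤ(a) = {Q ∈ ℤ[X] : ∑_j Q_j a(n+j) = 0 for all n} is the principal ideal generated by a unique monic P ∈ ℤ[X]. -/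
open Polynomial

/-- For `Q ∈ ℤ[X]`, `Q(∇)a(n) = ∑_j (coeff of X^j in Q) · a(n+j)`; this predicate says that
`Q(∇)a(n) = 0` for all `n ≥ 1`, i.e. `Q` annihilates the sequence `a`. -/
def Annihilates (Q : Polynomial ℤ) (a : ℕ → ℤ) : Prop :=
  ∀ n : ℕ, 1 ≤ n → (Q.sum fun j c => c * a (n + j)) = 0

noncomputable section AnnAux

variable {R : Type*} [CommRing R]

/-- The shift operator on sequences. -/
def shiftE (R : Type*) [CommRing R] : Module.End R (ℕ → R) where
  toFun b n := b (n + 1)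
  map_add' _ _ := rfl
  map_smul' _ _ := rfl

lemma shiftE_pow_apply (j : ℕ) (b : ℕ → R) (n : ℕ) :
    ((shiftE R ^ j) b) n = b (n + j) := by
  induction j generalizing b n with
  | zero => rfl
  | succ k ih =>
    rw [pow_succ]
    show ((shiftE R ^ k) (shiftE R b)) n = b (n + (k + 1))
    rw [ih]
    show b (n + k + 1) = b (n + (k + 1))
    congr 1

lemma sum_eq_aeval (p : R[X]) (b : ℕ → R) (n : ℕ) :
    (p.sum fun j c => c * b (n + j)) = ((aeval (shiftE R) p) b) n := by
  induction p using Polynomial.induction_on' with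
  | add p q hp hq =>
    rw [Polynomial.sum_add_index p q (fun j c => c * b (n + j)) (fun i => zero_mul _)
      (fun i c d => add_mul _ _ _), hp, hq, map_add (aeval (shiftE R))]
    rfl
  | monomial j c =>
    rw [Polynomial.sum_monomial_index c _ (zero_mul _), aeval_monomial]
    show c * b (n + j) = ((algebraMap R (Module.End R (ℕ → R)) c) ((shiftE R ^ j) b)) n
    rw [Module.algebraMap_end_apply, Pi.smul_apply, shiftE_pow_apply, smul_eq_mul]

lemma aeval_shift_vanish (p : R[X]) (b : ℕ → R) (hb : ∀ n, 1 ≤ n → b n = 0) :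
    ∀ n, 1 ≤ n → ((aeval (shiftE R) p) b) n = 0 := by
  intro n hn
  rw [← sum_eq_aeval, Polynomial.sum_def]
  apply Finset.sum_eq_zero
  intro j _
  rw [hb (n + j) (by omega), mul_zero]

lemma cast_sum (Q : Polynomial ℤ) (b : ℕ → ℤ) (n : ℕ) :
    ((Q.map (algebraMap ℤ ℚ)).sum fun j c => c * ((b (n + j) : ℤ) : ℚ)) =
      ((Q.sum fun j c => c * b (n + j) : ℤ) : ℚ) := by
  induction Q using Polynomial.induction_on' with
  | add p q hp hq =>
    rw [Polynomial.map_add,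
      Polynomial.sum_add_index (p.map (algebraMap ℤ ℚ)) (q.map (algebraMap ℤ ℚ))
        (fun j c => c * ((b (n + j) : ℤ) : ℚ)) (fun i => zero_mul _) (fun i c d => add_mul _ _ _),
      Polynomial.sum_add_index p q (fun j c => c * b (n + j)) (fun i => zero_mul _)
        (fun i c d => add_mul _ _ _),
      hp, hq, Int.cast_add]
  | monomial j c =>
    rw [map_monomial,
      Polynomial.sum_monomial_index (n := j) ((algebraMap ℤ ℚ) c)
        (fun j c => c * ((b (n + j) : ℤ) : ℚ)) (zero_mul _),
      Polynomial.sum_monomial_index (n := j) c (fun j c => c * b (n + j)) (zero_mul _)]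
    rw [eq_intCast (algebraMap ℤ ℚ) c]
    push_cast
    ring

end AnnAux

/-- Annihilation over ℤ is equivalent to annihilation of the cast sequence over ℚ. -/
lemma annihilates_iff_q (Q : Polynomial ℤ) (a : ℕ → ℤ) :
    Annihilates Q a ↔
      ∀ n, 1 ≤ n → ((aeval (shiftE ℚ) (Q.map (algebraMap ℤ ℚ))) fun m => ((a m : ℤ) : ℚ)) n = 0 := by
  constructor
  · intro h n hn
    rw [← sum_eq_aeval, cast_sum, h n hn, Int.cast_zero]
  · intro h n hn
    have := h n hn
    rw [← sum_eq_aeval, cast_sum] at this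
    exact_mod_cast this

/-- Every nonzero integer linear recurrence sequence has a unique monic minimal polynomial:
its annihilator ideal is the principal ideal generated by a unique monic `P ∈ ℤ[X]`. -/
theorem minimal_polynomial_of_LRS (a : ℕ → ℤ)
    (ha : ∃ n : ℕ, 1 ≤ n ∧ a n ≠ 0)
    (hLRS : ∃ Q : Polynomial ℤ, Q.Monic ∧ Annihilates Q a) :
    ∃! P : Polynomial ℤ, P.Monic ∧ ∀ Q : Polynomial ℤ, Annihilates Q a ↔ P ∣ Q := by
  obtain ⟨M, hM, hMann⟩ := hLRS
  set aQ : ℕ → ℚ := fun m => ((a m : ℤ) : ℚ) with haQ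
  -- the annihilator ideal over ℚ
  set J : Ideal (Polynomial ℚ) :=
    { carrier := {q | ∀ n, 1 ≤ n → ((aeval (shiftE ℚ) q) aQ) n = 0}
      add_mem' := by
        intro p q hp hq n hn
        rw [map_add (aeval (shiftE ℚ))]
        show ((aeval (shiftE ℚ) p) aQ + (aeval (shiftE ℚ) q) aQ) n = 0
        rw [Pi.add_apply, hp n hn, hq n hn, add_zero]
      zero_mem' := by
        intro n hn
        rw [map_zero (aeval (shiftE ℚ))]
        rfl
      smul_mem' := by
        intro r q hq n hn
        rw [smul_eq_mul, map_mul (aeval (shiftE ℚ))]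
        exact aeval_shift_vanish r _ hq n hn } with hJdef
  have memJ : ∀ q : Polynomial ℚ, q ∈ J ↔ ∀ n, 1 ≤ n → ((aeval (shiftE ℚ) q) aQ) n = 0 :=
    fun q => Iff.rfl
  obtain ⟨g, hg⟩ := (IsPrincipalIdealRing.principal J).principal
  have hMQ : M.map (algebraMap ℤ ℚ) ∈ J := (memJ _).2 ((annihilates_iff_q M a).1 hMann)
  have hgdvdM : g ∣ M.map (algebraMap ℤ ℚ) := by
    rw [hg, Ideal.submodule_span_eq, Ideal.mem_span_singleton] at hMQ
    exact hMQ
  have hMQmonic : (M.map (algebraMap ℤ ℚ)).Monic := hM.map _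
  have hgne : g ≠ 0 := ne_zero_of_dvd_ne_zero hMQmonic.ne_zero hgdvdM
  obtain ⟨P, hP⟩ := IsIntegrallyClosed.eq_map_mul_C_of_dvd (K := ℚ) hM hgdvdM
  -- hP : P.map (algebraMap ℤ ℚ) * C g.leadingCoeff = g
  have hlc : g.leadingCoeff ≠ 0 := leadingCoeff_ne_zero.mpr hgne
  have hPu : IsUnit (C g.leadingCoeff) := isUnit_C.mpr hlc.isUnit
  have hPassoc : Associated (P.map (algebraMap ℤ ℚ)) g := ⟨hPu.unit, hP⟩
  have hPmonic : P.Monic := by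
    apply Polynomial.monic_of_injective (f := algebraMap ℤ ℚ) (algebraMap ℤ ℚ).injective_int
    have : (P.map (algebraMap ℤ ℚ)).leadingCoeff * g.leadingCoeff = g.leadingCoeff := by
      have := congrArg leadingCoeff hP
      rwa [leadingCoeff_mul, leadingCoeff_C] at this
    exact mul_right_cancel₀ hlc (this.trans (one_mul g.leadingCoeff).symm)
  have key : ∀ Q : Polynomial ℤ, Annihilates Q a ↔ P ∣ Q := by
    intro Q
    rw [annihilates_iff_q, ← memJ, hg, Ideal.submodule_span_eq, Ideal.mem_span_singleton,
      ← hPassoc.dvd_iff_dvd_left,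
      Polynomial.map_dvd_map _ (algebraMap ℤ ℚ).injective_int hPmonic]
  refine ⟨P, ⟨hPmonic, key⟩, ?_⟩
  rintro P' ⟨hP'monic, key'⟩
  have h1 : P' ∣ P := (key' P).1 ((key P).2 dvd_rfl)
  have h2 : P ∣ P' := (key P').1 ((key' P').2 dvd_rfl)
  exact Polynomial.eq_of_monic_of_associated hP'monic hPmonic (associated_of_dvd_dvd h1 h2)
end

section
/- Let a : ℕ → ℤ, let α_1, …, α_r be distinct nonzero complex numbers and λ_1, …, λ_r ∈ ℂ[X] polynomials such that a(n) = λ_1(n)·α_1^n + ⋯ + λ_r(n)·α_r^n for all n ≥ 1. If λ_1 is not the zero polynomial, |α_1| > 1, and |α_i| < |α_1| for every i ≥ 2 such that λ_i is not the zero polynomial, then α_1 is a real number. -/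
/-!
Divide the representation by `‖α₁‖ⁿ`: the terms of the other occurring roots tend to `0`, so
`a(n)/‖α₁‖ⁿ = λ₁(n) uⁿ + o(1)` with `u = α₁/‖α₁‖` on the unit circle, and dividing further by
`n^d` (`d = deg λ₁`) gives `c uⁿ + o(1)` with `c ≠ 0` the leading coefficient of `λ₁`.
As `a(n)` is real, `Im (c uⁿ) → 0`. Since `Im (u w) = Re u · Im w + Im u · Re w`, this forces
`Im u · c uⁿ → 0`, while `‖c uⁿ‖ = ‖c‖ ≠ 0`; hence `Im u = 0` and `α₁` is real.
-/

open Polynomial Filter Topology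

namespace Polynomial

theorem eval_div_pow_natDegree_eq_eval_reverse {K : Type*} [Field K] (p : K[X]) {x : K}
    (hx : x ≠ 0) :
    p.eval x / x ^ p.natDegree = p.reverse.eval x⁻¹ := by
  let := invertibleOfNonzero hx
  rw [div_eq_iff (pow_ne_zero _ hx), ← invOf_eq_inv, eval, eval, eval₂_reverse_mul_pow]

theorem tendsto_eval_natCast_div_pow_natDegree {𝕜 : Type*} [RCLike 𝕜] (p : 𝕜[X]) :
    Tendsto (fun n : ℕ => p.eval (n : 𝕜) / (n : 𝕜) ^ p.natDegree) atTop (𝓝 p.leadingCoeff) := by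
  rw [← coeff_zero_reverse, coeff_zero_eq_eval_zero]
  have hcont : Tendsto (fun n : ℕ => p.reverse.eval (n : 𝕜)⁻¹) atTop (𝓝 (p.reverse.eval 0)) :=
    (p.reverse.continuous.tendsto 0).comp tendsto_inv_atTop_nhds_zero_nat
  refine hcont.congr' ?_
  filter_upwards [eventually_ne_atTop 0] with n hn
  exact (eval_div_pow_natDegree_eq_eval_reverse p (Nat.cast_ne_zero.mpr hn)).symm

theorem tendsto_eval_natCast_mul_pow_of_norm_lt_one {𝕜 : Type*} [NormedField 𝕜]
    [HasSummableGeomSeries 𝕜] (p : 𝕜[X]) {β : 𝕜} (hβ : ‖β‖ < 1) :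
    Tendsto (fun n : ℕ => p.eval (n : 𝕜) * β ^ n) atTop (𝓝 0) := by
  have hsum : (fun n : ℕ => p.eval (n : 𝕜) * β ^ n) =
      fun n : ℕ => ∑ i ∈ Finset.range (p.natDegree + 1), p.coeff i * ((n : 𝕜) ^ i * β ^ n) := by
    ext n
    simp only [eval_eq_sum_range, Finset.sum_mul, mul_assoc]
  rw [hsum]
  simpa using tendsto_finsetSum _ fun i _ =>
    (summable_pow_mul_geometric_of_norm_lt_one i hβ).tendsto_atTop_zero.const_mul (p.coeff i)

end Polynomial

theorem tendsto_sum_eval_mul_pow_div_pow {ι : Type*} (s : Finset ι) (lam : ι → ℂ[X])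
    (α : ι → ℂ) {ρ : ℝ} (hα : ∀ i ∈ s, lam i ≠ 0 → ‖α i‖ < ρ) :
    Tendsto (fun n : ℕ => (∑ i ∈ s, (lam i).eval (n : ℂ) * α i ^ n) / (ρ : ℂ) ^ n) atTop
      (𝓝 0) := by
  have hterm : ∀ i ∈ s,
      Tendsto (fun n : ℕ => (lam i).eval (n : ℂ) * (α i / ρ) ^ n) atTop (𝓝 0) := by
    intro i hi
    by_cases hlam : lam i = 0
    · simp [hlam]
    have hρ : 0 < ρ := (norm_nonneg _).trans_lt (hα i hi hlam)
    refine (lam i).tendsto_eval_natCast_mul_pow_of_norm_lt_one ?_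
    rw [norm_div, Complex.norm_real, Real.norm_of_nonneg hρ.le, div_lt_one hρ]
    exact hα i hi hlam
  simp only [Finset.sum_div, mul_div_assoc, ← div_pow]
  simpa only [Finset.sum_const_zero] using tendsto_finsetSum s hterm

namespace Complex

theorem im_eq_zero_of_tendsto_im_mul_pow {c u : ℂ} (hc : c ≠ 0) (hu : ‖u‖ = 1)
    (h : Tendsto (fun n : ℕ => (c * u ^ n).im) atTop (𝓝 0)) : u.im = 0 := by
  have hshift : ∀ n, u.im * (c * u ^ n).re = (c * u ^ (n + 1)).im - u.re * (c * u ^ n).im := by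
    intro n
    rw [pow_succ, ← mul_assoc, mul_comm _ u, mul_im]
    ring
  have hre : Tendsto (fun n => u.im * (c * u ^ n).re) atTop (𝓝 0) := by
    have := (h.comp (tendsto_add_atTop_nat 1)).sub (h.const_mul u.re)
    rw [mul_zero, sub_zero] at this
    exact this.congr fun n => (hshift n).symm
  have him : Tendsto (fun n => u.im * (c * u ^ n).im) atTop (𝓝 0) := by
    simpa only [mul_zero] using h.const_mul u.im
  have hnorm : ∀ n : ℕ,
      (u.im * (c * u ^ n).re) ^ 2 + (u.im * (c * u ^ n).im) ^ 2 = u.im ^ 2 * ‖c‖ ^ 2 := by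
    intro n
    have : ‖c * u ^ n‖ = ‖c‖ := by simp [hu]
    rw [← this, Complex.sq_norm, normSq_apply]
    ring
  have hlim := (hre.pow 2).add (him.pow 2)
  simp only [hnorm] at hlim
  simpa [hc] using tendsto_const_nhds_iff.mp hlim

theorem tendsto_im_leadingCoeff_mul_pow (p : ℂ[X]) {u : ℂ} (hu : ‖u‖ = 1)
    (h : Tendsto (fun n : ℕ => (p.eval (n : ℂ) * u ^ n).im) atTop (𝓝 0)) :
    Tendsto (fun n : ℕ => (p.leadingCoeff * u ^ n).im) atTop (𝓝 0) := by
  have hscaled : Tendsto (fun n : ℕ => (p.eval (n : ℂ) * u ^ n / (n : ℂ) ^ p.natDegree).im)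
      atTop (𝓝 0) := by
    refine squeeze_zero_norm' ?_ (tendsto_zero_iff_norm_tendsto_zero.mp h)
    filter_upwards [eventually_ge_atTop 1] with n hn
    rw [← ofReal_natCast, ← ofReal_pow, div_ofReal_im, norm_div]
    refine div_le_self (norm_nonneg _) ?_
    rw [norm_pow, Real.norm_natCast]
    exact one_le_pow₀ (mod_cast hn)
  have herr : Tendsto (fun n : ℕ =>
      (p.eval (n : ℂ) / (n : ℂ) ^ p.natDegree - p.leadingCoeff) * u ^ n) atTop (𝓝 0) := by
    have := p.tendsto_eval_natCast_div_pow_natDegree.sub_const p.leadingCoeff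
    rw [sub_self, tendsto_zero_iff_norm_tendsto_zero] at this
    simpa [tendsto_zero_iff_norm_tendsto_zero, hu] using this
  have hdiff := hscaled.sub ((continuous_im.tendsto 0).comp herr)
  rw [zero_im, sub_zero] at hdiff
  refine hdiff.congr fun n => ?_
  rw [Function.comp_apply, ← sub_im]
  congr 1
  ring

theorem im_eq_zero_of_tendsto_sub_eval_mul_pow_div_norm_pow {x : ℕ → ℝ} {p : ℂ[X]} (hp : p ≠ 0)
    {α : ℂ} (h : Tendsto (fun n : ℕ => ((x n : ℂ) - p.eval (n : ℂ) * α ^ n) / (‖α‖ : ℂ) ^ n)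
      atTop (𝓝 0)) :
    α.im = 0 := by
  rcases eq_or_ne α 0 with rfl | hα
  · rfl
  set u := α / ‖α‖
  have hu : ‖u‖ = 1 := by simp [u, hα]
  have him : Tendsto (fun n : ℕ => (p.eval (n : ℂ) * u ^ n).im) atTop (𝓝 0) := by
    have := ((continuous_im.tendsto 0).comp h).neg
    rw [zero_im, neg_zero] at this
    refine this.congr fun n => ?_
    simp [sub_div, mul_div_assoc, div_pow, u, ← ofReal_pow, div_ofReal_im]
  have hu_im := im_eq_zero_of_tendsto_im_mul_pow (leadingCoeff_ne_zero.mpr hp) hu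
    (tendsto_im_leadingCoeff_mul_pow p hu him)
  simpa [u, div_ofReal_im, hα] using hu_im

end Complex

theorem dominant_root_is_real_general (a : ℕ → ℤ) (r : ℕ) (hr : 0 < r)
    (α : Fin r → ℂ) (lam : Fin r → Polynomial ℂ)
    (hrep : ∀ n : ℕ, 1 ≤ n → (a n : ℂ) = ∑ i : Fin r, (lam i).eval (n : ℂ) * α i ^ n)
    (hlam1 : lam ⟨0, hr⟩ ≠ 0)
    (hdom : ∀ i : Fin r, i ≠ ⟨0, hr⟩ → lam i ≠ 0 →
      ‖α i‖ < ‖α ⟨0, hr⟩‖) :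
    ∃ x : ℝ, α ⟨0, hr⟩ = (x : ℂ) := by
  set i₀ : Fin r := ⟨0, hr⟩
  have hrest := tendsto_sum_eval_mul_pow_div_pow (Finset.univ.erase i₀) lam α
    fun i hi => hdom i (Finset.ne_of_mem_erase hi)
  have him : (α i₀).im = 0 := by
    refine Complex.im_eq_zero_of_tendsto_sub_eval_mul_pow_div_norm_pow (x := fun n => a n) hlam1
      (hrest.congr' ?_)
    filter_upwards [eventually_ge_atTop 1] with n hn
    rw [Complex.ofReal_intCast, hrep n hn, ← Finset.add_sum_erase _ _ (Finset.mem_univ i₀),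
      add_sub_cancel_left]
  exact ⟨(α i₀).re, Complex.ext rfl him⟩

/-- If an integer sequence has a generalized power-sum representation
`a n = ∑ i, λ i (n) · (α i)^n` with distinct nonzero `α i`, in which the coefficient `λ 1` of the
first root is nonzero, `|α 1| > 1`, and every other root actually occurring (i.e. with nonzero
coefficient) has modulus strictly smaller than `|α 1|`, then the dominant root `α 1` is real. -/
theorem dominant_root_is_real (a : ℕ → ℤ) (r : ℕ) (hr : 0 < r)
    (α : Fin r → ℂ) (lam : Fin r → Polynomial ℂ)
    (hinj : Function.Injective α) (hα0 : ∀ i : Fin r, α i ≠ 0)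
    (hrep : ∀ n : ℕ, 1 ≤ n → (a n : ℂ) = ∑ i : Fin r, (lam i).eval (n : ℂ) * α i ^ n)
    (hlam1 : lam ⟨0, hr⟩ ≠ 0)
    (habs1 : 1 < ‖α ⟨0, hr⟩‖)
    (hdom : ∀ i : Fin r, i ≠ ⟨0, hr⟩ → lam i ≠ 0 →
      ‖α i‖ < ‖α ⟨0, hr⟩‖) :
    ∃ x : ℝ, α ⟨0, hr⟩ = (x : ℂ) :=
  dominant_root_is_real_general a r hr α lam hrep hlam1 hdom
end

section
/- Let a : ℕ → ℤ, let α_1, …, α_r be distinct nonzero complex numbers and λ_1, …, λ_r ∈ ℂ[X] polynomials such that a(n) = λ_1(n)·α_1^n + ⋯ + λ_r(n)·α_r^n for all n ≥ 1. Suppose λ_1 is not the zero polynomial, |α_1| > 1, and |α_i| < |α_1| for every i ≥ 2 such that λ_i is not the zero polynomial. Then exactly one of the following two mutually exclusive alternatives holds: (1) there exists n_0 such that either (a(n))_{n ≥ n_0} is strictly increasing, or (−a(n))_{n ≥ n_0} is strictly increasing; (2) the sequence a has infinitely many sign changes, i.e. both the set {n : a(n) > 0} and the set {n : a(n) < 0}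 are infinite. -/
/-!
The dominant term gives `a n ~ c n^d β^n`, where `β = α₁` and `c ≠ 0` is the leading coefficient
of `λ₁`. With `u n = a n / n^d`, the real sequence `u n β⁻ⁿ` tends to `c`, so `β⁻¹` is the limit
of the real ratios `u n / u (n + 1)`. Hence `β` is real and `a n / (n^d β^n)` tends to a nonzero
real `l`. If `β > 1`, then `a (n + 1) - a n ≈ (β - 1) l n^d β^n` eventually has the sign of `l`;
if `β < -1`, the sign of `a n` is eventually that of `l β^n`, which alternates with the parity
of `n`.
-/

open Polynomial Filter Topology Asymptotics

section RCLike

variable {𝕜 : Type*} [RCLike 𝕜]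

theorem isLittleO_natCast_pow_pow_of_lt {i j : ℕ} (hij : i < j) :
    (fun n : ℕ => (n : 𝕜) ^ i) =o[atTop] fun n => (n : 𝕜) ^ j := by
  refine isLittleO_norm_norm.mp ?_
  simpa only [norm_pow, RCLike.norm_natCast, Function.comp_def] using
    (isLittleO_pow_pow_atTop_of_lt hij).comp_tendsto tendsto_natCast_atTop_atTop

theorem Polynomial.isEquivalent_eval_natCast (p : 𝕜[X]) :
    (fun n : ℕ => p.eval (n : 𝕜)) ~[atTop] fun n => p.leadingCoeff * (n : 𝕜) ^ p.natDegree := by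
  simp only [eval_eq_sum_range, Finset.sum_range_succ]
  refine IsLittleO.add_isEquivalent (IsLittleO.fun_sum fun i hi => ?_) IsEquivalent.refl
  by_cases hp : p = 0
  · simp [hp]
  refine IsLittleO.const_mul_left ?_ _
  exact (isLittleO_natCast_pow_pow_of_lt (Finset.mem_range.mp hi)).const_mul_right
    (leadingCoeff_ne_zero.mpr hp)

theorem Polynomial.isLittleO_eval_mul_pow (p : 𝕜[X]) {γ β c : 𝕜} (hγ : ‖γ‖ < ‖β‖) (hc : c ≠ 0)
    (d : ℕ) :
    (fun n : ℕ => p.eval (n : 𝕜) * γ ^ n) =o[atTop] fun n => c * (n : 𝕜) ^ d * β ^ n := by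
  have hpoly : (fun n : ℕ => p.eval (n : 𝕜)) =O[atTop] fun n => (n : 𝕜) ^ p.natDegree :=
    (p.isEquivalent_eval_natCast.isBigO).trans (isBigO_const_mul_self _ _ _)
  have hgeom : (fun n : ℕ => (n : 𝕜) ^ p.natDegree * γ ^ n) =o[atTop] fun n => ‖β‖ ^ n :=
    isLittleO_pow_const_mul_const_pow_const_pow_of_norm_lt _ hγ
  have hscale : (fun n : ℕ => ‖β‖ ^ n) =O[atTop] fun n => c * (n : 𝕜) ^ d * β ^ n := by
    refine IsBigO.of_bound ‖c‖⁻¹ ?_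
    filter_upwards [eventually_ge_atTop 1] with n hn
    have hn : (1 : ℝ) ≤ (n : ℝ) ^ d := one_le_pow₀ (by exact_mod_cast hn)
    rw [norm_mul, norm_mul, norm_pow, norm_pow, RCLike.norm_natCast, norm_pow, norm_norm,
      ← mul_assoc, ← mul_assoc, inv_mul_cancel₀ (norm_ne_zero_iff.mpr hc), one_mul]
    exact le_mul_of_one_le_left (by positivity) hn
  exact ((hpoly.mul (isBigO_refl _ _)).trans_isLittleO
    (by simpa only [mul_assoc] using hgeom)).trans_isBigO hscale

theorem isEquivalent_sum_eval_mul_pow {ι : Type*} [Fintype ι] (α : ι → 𝕜) (lam : ι → 𝕜[X])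
    (i₀ : ι) (hlam : lam i₀ ≠ 0) (hdom : ∀ i, i ≠ i₀ → lam i ≠ 0 → ‖α i‖ < ‖α i₀‖) :
    (fun n : ℕ => ∑ i, (lam i).eval (n : 𝕜) * α i ^ n) ~[atTop]
      fun n => (lam i₀).leadingCoeff * (n : 𝕜) ^ (lam i₀).natDegree * α i₀ ^ n := by
  classical
  simp only [← Finset.add_sum_erase _ _ (Finset.mem_univ i₀)]
  refine ((lam i₀).isEquivalent_eval_natCast.mul IsEquivalent.refl).add_isLittleO
    (IsLittleO.fun_sum fun i hi => ?_)
  by_cases hi₀ : lam i = 0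
  · simp [hi₀]
  exact (lam i).isLittleO_eval_mul_pow (hdom i (Finset.ne_of_mem_erase hi) hi₀)
    (leadingCoeff_ne_zero.mpr hlam) _

end RCLike

theorem Complex.im_eq_zero_of_tendsto_ofReal {α : Type*} {l : Filter α} [l.NeBot] {y : α → ℝ}
    {z : ℂ} (h : Tendsto (fun x => (y x : ℂ)) l (𝓝 z)) : z.im = 0 :=
  tendsto_nhds_unique ((Complex.continuous_im.tendsto z).comp h) (by simp [Function.comp_def])

theorem Complex.im_eq_zero_of_tendsto_ofReal_mul_pow {u : ℕ → ℝ} {w c : ℂ} (hw : w ≠ 0)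
    (hc : c ≠ 0) (h : Tendsto (fun n => (u n : ℂ) * w ^ n) atTop (𝓝 c)) : w.im = 0 := by
  have hratio : Tendsto (fun n => (u n : ℂ) * w ^ n / ((u (n + 1) : ℂ) * w ^ (n + 1)) * w)
      atTop (𝓝 (c / c * w)) :=
    (h.div ((tendsto_add_atTop_iff_nat 1).mpr h) hc).mul_const w
  rw [div_self hc, one_mul] at hratio
  -- `w` is the limit of the real numbers `u n / u (n + 1)`.
  refine Complex.im_eq_zero_of_tendsto_ofReal (l := atTop) (y := fun n => u n / u (n + 1)) ?_
  refine hratio.congr fun n => ?_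
  rcases eq_or_ne (u (n + 1)) 0 with hu | hu
  · simp [hu]
  · push_cast
    field_simp
    ring

theorem im_eq_zero_and_exists_tendsto_div_of_isEquivalent {x : ℕ → ℝ} {c β : ℂ} {d : ℕ}
    (hc : c ≠ 0) (hβ : β ≠ 0) (h : (fun n => (x n : ℂ)) ~[atTop] fun n => c * (n : ℂ) ^ d * β ^ n) :
    β.im = 0 ∧ ∃ l : ℝ, l ≠ 0 ∧
      Tendsto (fun n => x n / ((n : ℝ) ^ d * β.re ^ n)) atTop (𝓝 l) := by
  have hscale : ∀ᶠ n : ℕ in atTop, c * (n : ℂ) ^ d * β ^ n ≠ 0 := by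
    filter_upwards [eventually_ge_atTop 1] with n hn
    have : (n : ℂ) ≠ 0 := by exact_mod_cast (by omega : n ≠ 0)
    positivity
  have hlim : Tendsto (fun n => (x n : ℂ) / ((n : ℂ) ^ d * β ^ n)) atTop (𝓝 c) := by
    have := ((isEquivalent_iff_tendsto_one hscale).mp h).mul_const c
    rw [one_mul] at this
    refine this.congr fun n => ?_
    simp only [Pi.div_apply]
    rw [mul_assoc, div_mul_eq_div_div_swap, div_mul_cancel₀ _ hc]
  have hβim : β.im = 0 := by
    have := Complex.im_eq_zero_of_tendsto_ofReal_mul_pow (u := fun n => x n / (n : ℝ) ^ d)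
      (inv_ne_zero hβ) hc (hlim.congr fun n => by push_cast; ring)
    simpa [Complex.inv_im, hβ] using this
  have hβre : β = (β.re : ℂ) := Complex.ext rfl (by simp [hβim])
  have hlim' :
      Tendsto (fun n => Complex.ofReal (x n / ((n : ℝ) ^ d * β.re ^ n))) atTop (𝓝 c) := by
    rw [hβre] at hlim
    exact hlim.congr fun n => by push_cast; rfl
  have hcim := Complex.im_eq_zero_of_tendsto_ofReal hlim'
  refine ⟨hβim, c.re, fun hre => hc (Complex.ext hre hcim), ?_⟩
  simpa only [Function.comp_def, Complex.ofReal_re] using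
    (Complex.continuous_re.tendsto c).comp hlim'

section RealAsymptotics

variable {x : ℕ → ℝ} {β l : ℝ} {d : ℕ}

theorem eventually_lt_succ_of_tendsto_div_natCast_pow_mul_pow (hβ : 1 < β) (hl : 0 < l)
    (h : Tendsto (fun n => x n / ((n : ℝ) ^ d * β ^ n)) atTop (𝓝 l)) :
    ∀ᶠ n in atTop, x n < x (n + 1) := by
  set D : ℕ → ℝ := fun n => (n : ℝ) ^ d * β ^ n
  have hsucc : Tendsto (fun n => x (n + 1) / D (n + 1)) atTop (𝓝 l) :=
    (tendsto_add_atTop_iff_nat 1).mpr h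
  have hgap : ∀ᶠ n in atTop, x n / D n < β * (x (n + 1) / D (n + 1)) :=
    h.eventually_lt (hsucc.const_mul β) (by nlinarith)
  filter_upwards [hgap, hsucc.eventually_const_lt hl, eventually_ge_atTop 1] with n hgap hpos hn
  have hD : 0 < D n := by
    have : (0 : ℝ) < n := by exact_mod_cast hn
    positivity
  have hDsucc : β * D n ≤ D (n + 1) := by
    have hβ0 : 0 < β := by linarith
    have hmono : (n : ℝ) ^ d ≤ ((n + 1 : ℕ) : ℝ) ^ d := by gcongr; omega
    calc β * D n = (n : ℝ) ^ d * β ^ (n + 1) := by ring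
      _ ≤ D (n + 1) := mul_le_mul_of_nonneg_right hmono (by positivity)
  calc x n = x n / D n * D n := (div_mul_cancel₀ _ hD.ne').symm
    _ < β * (x (n + 1) / D (n + 1)) * D n := by gcongr
    _ = x (n + 1) / D (n + 1) * (β * D n) := by ring
    _ ≤ x (n + 1) / D (n + 1) * D (n + 1) := by gcongr
    _ = x (n + 1) := div_mul_cancel₀ _ (by positivity)

theorem frequently_pos_and_frequently_neg_of_tendsto_div_natCast_pow_mul_pow (hβ : β < 0)
    (hl : 0 < l) (h : Tendsto (fun n => x n / ((n : ℝ) ^ d * β ^ n)) atTop (𝓝 l)) :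
    (∃ᶠ n in atTop, 0 < x n) ∧ ∃ᶠ n in atTop, x n < 0 := by
  obtain ⟨N, hN⟩ := eventually_atTop.mp (h.eventually_const_lt hl)
  constructor
  · refine frequently_atTop.mpr fun M => ⟨2 * (N + M + 1), by omega, ?_⟩
    have hpow : 0 < β ^ (2 * (N + M + 1)) := (even_two_mul _).pow_pos hβ.ne
    have := hN (2 * (N + M + 1)) (by omega)
    exact (div_pos_iff_of_pos_right (by positivity)).mp this
  · refine frequently_atTop.mpr fun M => ⟨2 * (N + M + 1) + 1, by omega, ?_⟩
    have hpow : β ^ (2 * (N + M + 1) + 1) < 0 := (odd_two_mul_add_one _).pow_neg hβ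
    have := hN (2 * (N + M + 1) + 1) (by omega)
    have hD : ((2 * (N + M + 1) + 1 : ℕ) : ℝ) ^ d * β ^ (2 * (N + M + 1) + 1) < 0 :=
      mul_neg_of_pos_of_neg (by positivity) hpow
    rcases div_pos_iff.mp this with ⟨-, hD'⟩ | ⟨hx, -⟩
    · exact absurd hD' hD.not_gt
    · exact hx

end RealAsymptotics

section IntegerSequences

variable {a : ℕ → ℤ} {β l : ℝ} {d : ℕ}

theorem exists_forall_lt_succ_or_neg_lt_succ_of_tendsto (hβ : 1 < β) (hl : l ≠ 0)
    (h : Tendsto (fun n => (a n : ℝ) / ((n : ℝ) ^ d * β ^ n)) atTop (𝓝 l)) :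
    ∃ n₀ : ℕ, (∀ n : ℕ, n₀ ≤ n → a n < a (n + 1)) ∨ (∀ n : ℕ, n₀ ≤ n → -a n < -a (n + 1)) := by
  rcases hl.lt_or_gt with hl | hl
  · have hneg : Tendsto (fun n => -(a n : ℝ) / ((n : ℝ) ^ d * β ^ n)) atTop (𝓝 (-l)) := by
      simpa only [neg_div] using h.neg
    obtain ⟨n₀, hn₀⟩ := eventually_atTop.mp
      (eventually_lt_succ_of_tendsto_div_natCast_pow_mul_pow hβ (neg_pos.mpr hl) hneg)
    exact ⟨n₀, Or.inr fun n hn => by exact_mod_cast hn₀ n hn⟩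
  · obtain ⟨n₀, hn₀⟩ := eventually_atTop.mp
      (eventually_lt_succ_of_tendsto_div_natCast_pow_mul_pow hβ hl h)
    exact ⟨n₀, Or.inl fun n hn => by exact_mod_cast hn₀ n hn⟩

theorem infinite_pos_and_infinite_neg_of_tendsto (hβ : β < 0) (hl : l ≠ 0)
    (h : Tendsto (fun n => (a n : ℝ) / ((n : ℝ) ^ d * β ^ n)) atTop (𝓝 l)) :
    {n : ℕ | 0 < a n}.Infinite ∧ {n : ℕ | a n < 0}.Infinite := by
  simp only [← Nat.frequently_atTop_iff_infinite]
  rcases hl.lt_or_gt with hl | hl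
  · have hneg : Tendsto (fun n => -(a n : ℝ) / ((n : ℝ) ^ d * β ^ n)) atTop (𝓝 (-l)) := by
      simpa only [neg_div] using h.neg
    obtain ⟨hpos, hneg⟩ :=
      frequently_pos_and_frequently_neg_of_tendsto_div_natCast_pow_mul_pow hβ (neg_pos.mpr hl) hneg
    exact ⟨hneg.mono fun n hn => by exact_mod_cast neg_lt_zero.mp hn,
      hpos.mono fun n hn => by exact_mod_cast neg_pos.mp hn⟩
  · obtain ⟨hpos, hneg⟩ :=
      frequently_pos_and_frequently_neg_of_tendsto_div_natCast_pow_mul_pow hβ hl h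
    exact ⟨hpos.mono fun n hn => by exact_mod_cast hn, hneg.mono fun n hn => by exact_mod_cast hn⟩

theorem eventually_pos_of_forall_lt_succ {n₀ : ℕ} (h : ∀ n : ℕ, n₀ ≤ n → a n < a (n + 1)) :
    ∀ᶠ n in atTop, 0 < a n := by
  have hgrowth : ∀ k : ℕ, a n₀ + k ≤ a (n₀ + k) := by
    intro k
    induction k with
    | zero => simp
    | succ k ih =>
      have := h (n₀ + k) (by omega)
      rw [← add_assoc]
      push_cast
      omega
  filter_upwards [eventually_ge_atTop (n₀ + (1 - a n₀).toNat)] with n hn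
  obtain ⟨k, rfl⟩ := Nat.exists_eq_add_of_le (le_of_add_le_left hn)
  have := hgrowth k
  omega

theorem not_eventually_lt_succ_and_infinite_sign_changes :
    ¬((∃ n₀ : ℕ, (∀ n : ℕ, n₀ ≤ n → a n < a (n + 1)) ∨ (∀ n : ℕ, n₀ ≤ n → -a n < -a (n + 1))) ∧
      {n : ℕ | 0 < a n}.Infinite ∧ {n : ℕ | a n < 0}.Infinite) := by
  rintro ⟨⟨n₀, hmono | hmono⟩, hpos, hneg⟩
  · obtain ⟨n, hn, hn'⟩ :=
      ((Nat.frequently_atTop_iff_infinite.mpr hneg).and_eventually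
        (eventually_pos_of_forall_lt_succ hmono)).exists
    omega
  · obtain ⟨n, hn, hn'⟩ :=
      ((Nat.frequently_atTop_iff_infinite.mpr hpos).and_eventually
        (eventually_pos_of_forall_lt_succ (a := fun n => -a n) hmono)).exists
    omega

end IntegerSequences

theorem eventually_monotone_or_infinitely_many_sign_changes_general
    (a : ℕ → ℤ) (r : ℕ) (hr : 0 < r)
    (α : Fin r → ℂ) (lam : Fin r → Polynomial ℂ)
    (hrep : ∀ n : ℕ, 1 ≤ n → (a n : ℂ) = ∑ i : Fin r, (lam i).eval (n : ℂ) * α i ^ n)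
    (hlam1 : lam ⟨0, hr⟩ ≠ 0)
    (habs1 : 1 < ‖α ⟨0, hr⟩‖)
    (hdom : ∀ i : Fin r, i ≠ ⟨0, hr⟩ → lam i ≠ 0 →
      ‖α i‖ < ‖α ⟨0, hr⟩‖) :
    Xor'
      (∃ n₀ : ℕ, (∀ n : ℕ, n₀ ≤ n → a n < a (n + 1)) ∨ (∀ n : ℕ, n₀ ≤ n → -a n < -a (n + 1)))
      ({n : ℕ | 0 < a n}.Infinite ∧ {n : ℕ | a n < 0}.Infinite) := by
  have hequiv := (isEquivalent_sum_eval_mul_pow α lam _ hlam1 hdom).congr_left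
    (eventually_atTop.mpr ⟨1, fun n hn => (hrep n hn).symm⟩)
  obtain ⟨hβim, l, hl, hlim⟩ := im_eq_zero_and_exists_tendsto_div_of_isEquivalent
    (leadingCoeff_ne_zero.mpr hlam1) (norm_pos_iff.mp (one_pos.trans habs1)) hequiv
  have hβre : 1 < |(α ⟨0, hr⟩).re| := by rwa [Complex.abs_re_eq_norm.mpr hβim]
  refine (xor_iff_or_and_not_and _ _).mpr ⟨?_, not_eventually_lt_succ_and_infinite_sign_changes⟩
  rcases lt_abs.mp hβre with hβ | hβ
  · exact Or.inl (exists_forall_lt_succ_or_neg_lt_succ_of_tendsto hβ hl hlim)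
  · exact Or.inr (infinite_pos_and_infinite_neg_of_tendsto (by linarith) hl hlim)

/-- Dichotomy for integer sequences with a dominant root: exactly one of the following holds.
(1) From some index on, either `a` or `-a` is strictly increasing.
(2) `a` changes sign infinitely often: both `{n | a n > 0}` and `{n | a n < 0}` are infinite. -/
theorem eventually_monotone_or_infinitely_many_sign_changes
    (a : ℕ → ℤ) (r : ℕ) (hr : 0 < r)
    (α : Fin r → ℂ) (lam : Fin r → Polynomial ℂ)
    (hinj : Function.Injective α) (hα0 : ∀ i : Fin r, α i ≠ 0)
    (hrep : ∀ n : ℕ, 1 ≤ n → (a n : ℂ) = ∑ i : Fin r, (lam i).eval (n : ℂ) * α i ^ n)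
    (hlam1 : lam ⟨0, hr⟩ ≠ 0)
    (habs1 : 1 < ‖α ⟨0, hr⟩‖)
    (hdom : ∀ i : Fin r, i ≠ ⟨0, hr⟩ → lam i ≠ 0 →
      ‖α i‖ < ‖α ⟨0, hr⟩‖) :
    Xor'
      (∃ n₀ : ℕ, (∀ n : ℕ, n₀ ≤ n → a n < a (n + 1)) ∨ (∀ n : ℕ, n₀ ≤ n → -a n < -a (n + 1)))
      ({n : ℕ | 0 < a n}.Infinite ∧ {n : ℕ | a n < 0}.Infinite) :=
  eventually_monotone_or_infinitely_many_sign_changes_general a r hr α lam hrep hlam1 habs1 hdom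
end

section
/- Under the main setting, for every s_0 ∈ ℂ the set of tuples (k_1, …, k_{r−1}) ∈ ℕ^{r−1} with k_1 ≥ k_2 ≥ ⋯ ≥ k_{r−1} ≥ 0 and exp((s_0 + k_1)·log α_1) = α_2^{k_1−k_2}·α_3^{k_2−k_3}⋯α_r^{k_{r−1}} is finite; i.e. every point of the pole set S is reached by only finitely many tuples of parameters. -/
/-!
Taking absolute values, the left-hand side has size `e^{Re(s₀) log α₁} · α₁^{k₁}`, while the
exponents on the right telescope to `k₁`, so the right-hand side is at most `B^{k₁}` for any
`B < α₁` bounding `|α₂|, …, |α_r|`. Hence `k₁` is bounded, and so are all `k_i ≤ k₁`.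
-/

open Polynomial

open Filter

lemma Finset.sum_range_tsub_of_antitone {M : Type*} [AddCommMonoid M] [PartialOrder M] [Sub M]
    [OrderedSub M] [AddLeftMono M] [AddLeftReflectLE M] [ExistsAddOfLE M] {f : ℕ → M}
    (h : Antitone f) (n : ℕ) :
    ∑ i ∈ Finset.range n, (f i - f (i + 1)) = f 0 - f n := by
  apply Finset.sum_range_induction
  case base => exact tsub_eq_of_eq_add (zero_add (f 0)).symm
  case step =>
    intro n _
    exact (tsub_add_tsub_cancel (h (Nat.zero_le n)) (h (Nat.le_succ n))).symm

lemma norm_prod_pow_tsub_le {𝕜 : Type*} [NormedField 𝕜] {z : ℕ → 𝕜} {k : ℕ → ℕ} {m : ℕ}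
    {B : ℝ} (hk : Antitone k) (hkm : k m = 0) (hB : ∀ i < m, ‖z i‖ ≤ B) :
    ‖∏ i ∈ Finset.range m, z i ^ (k i - k (i + 1))‖ ≤ B ^ k 0 :=
  calc ‖∏ i ∈ Finset.range m, z i ^ (k i - k (i + 1))‖
      = ∏ i ∈ Finset.range m, ‖z i‖ ^ (k i - k (i + 1)) := by simp only [norm_prod, norm_pow]
    _ ≤ ∏ i ∈ Finset.range m, B ^ (k i - k (i + 1)) :=
        Finset.prod_le_prod (fun _ _ => by positivity) fun i hi =>
          pow_le_pow_left₀ (norm_nonneg _) (hB i (Finset.mem_range.1 hi)) _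
    _ = B ^ k 0 := by
        rw [Finset.prod_pow_eq_pow_sum, Finset.sum_range_tsub_of_antitone hk, hkm, Nat.sub_zero]

lemma norm_cexp_add_natCast_mul_log {x : ℝ} (hx : 0 < x) (s : ℂ) (n : ℕ) :
    ‖Complex.exp ((s + n) * Real.log x)‖ = Real.exp (s.re * Real.log x) * x ^ n := by
  rw [Complex.norm_exp, ← Real.exp_log (pow_pos hx n), Real.log_pow, ← Real.exp_add]
  congr 1
  simp [Complex.mul_re, add_mul]

lemma exists_nonneg_lt_forall_norm_le {E : Type*} [SeminormedAddGroup E] {z : ℕ → E} {m : ℕ}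
    {c : ℝ} (hc : 0 < c) (h : ∀ i < m, ‖z i‖ < c) :
    ∃ B, 0 ≤ B ∧ B < c ∧ ∀ i < m, ‖z i‖ ≤ B := by
  refine ⟨((Finset.range m).sup fun i => ‖z i‖₊ : NNReal), NNReal.coe_nonneg _, ?_, fun i hi => ?_⟩
  · lift c to NNReal using hc.le
    rw [NNReal.coe_lt_coe, Finset.sup_lt_iff (by exact_mod_cast hc)]
    exact fun i hi => h i (Finset.mem_range.1 hi)
  · exact NNReal.coe_le_coe.2 (Finset.le_sup (f := fun i => ‖z i‖₊) (Finset.mem_range.2 hi))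

lemma eventually_pow_lt_mul_pow {B x C : ℝ} (hB : 0 ≤ B) (hBx : B < x) (hC : 0 < C) :
    ∀ᶠ n : ℕ in atTop, B ^ n < C * x ^ n := by
  have hx : 0 < x := hB.trans_lt hBx
  have hratio : Tendsto (fun n : ℕ => (B / x) ^ n) atTop (nhds 0) :=
    tendsto_pow_atTop_nhds_zero_of_lt_one (div_nonneg hB hx.le) ((div_lt_one hx).2 hBx)
  filter_upwards [hratio.eventually (gt_mem_nhds hC)] with n hn
  rwa [div_pow, div_lt_iff₀ (pow_pos hx n)] at hn

lemma finite_setOf_bounded_vanishing_from (m N : ℕ) :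
    {k : ℕ → ℕ | (∀ i, m ≤ i → k i = 0) ∧ ∀ i, k i ≤ N}.Finite := by
  refine (Set.finite_range fun (f : Fin m → Fin (N + 1)) (i : ℕ) =>
    if h : i < m then (f ⟨i, h⟩ : ℕ) else 0).subset ?_
  rintro k ⟨hzero, hle⟩
  refine ⟨fun i => ⟨k i, Nat.lt_succ_of_le (hle i)⟩, funext fun i => ?_⟩
  dsimp only
  split_ifs with h
  · rfl
  · exact (hzero i (not_lt.1 h)).symm

theorem finitely_many_tuples_per_pole_general
    (r : ℕ)
    (α : ℕ → ℂ)
    (α₁ : ℝ) (hα₁gt : 1 < α₁)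
    (hdom : ∀ i, 1 ≤ i → i < r → ‖α i‖ < α₁) :
    ∀ s₀ : ℂ,
      Set.Finite {k : ℕ → ℕ | (∀ i, k (i + 1) ≤ k i) ∧ (∀ i, r - 1 ≤ i → k i = 0) ∧
        Complex.exp ((s₀ + (k 0 : ℂ)) * (Real.log α₁ : ℂ)) =
          ∏ i ∈ Finset.range (r - 1), α (i + 1) ^ (k i - k (i + 1))} := by
  intro s₀
  have hα₁pos : 0 < α₁ := one_pos.trans hα₁gt
  obtain ⟨B, hB0, hBα₁, hB⟩ := exists_nonneg_lt_forall_norm_le (z := fun i => α (i + 1)) hα₁pos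
    fun i (hi : i < r - 1) => hdom (i + 1) (Nat.le_add_left 1 i) (by omega)
  obtain ⟨N, hN⟩ := eventually_atTop.1
    (eventually_pow_lt_mul_pow hB0 hBα₁ (Real.exp_pos (s₀.re * Real.log α₁)))
  refine (finite_setOf_bounded_vanishing_from (r - 1) N).subset ?_
  rintro k ⟨hsucc, hzero, hpole⟩
  have hk : Antitone k := antitone_nat_of_succ_le hsucc
  refine ⟨hzero, fun i => (hk (Nat.zero_le i)).trans (not_lt.1 fun hN₀ => ?_)⟩
  have hnorm := congrArg norm hpole
  rw [norm_cexp_add_natCast_mul_log hα₁pos] at hnorm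
  exact (hN _ hN₀.le).not_ge (hnorm ▸ norm_prod_pow_tsub_le hk (hzero _ le_rfl) hB)

/-- Under the main setting, every point `s₀` of the pole set is reached by only finitely many
parameter tuples `k₁ ≥ k₂ ≥ ⋯ ≥ k_{r-1} ≥ 0` (encoded as nonincreasing `k : ℕ → ℕ` vanishing
from index `r-1` on) satisfying
`exp((s₀+k₁)·log α₁) = α₂^{k₁-k₂}·α₃^{k₂-k₃}⋯α_r^{k_{r-1}}`. -/
theorem finitely_many_tuples_per_pole
    (a : ℕ → ℤ) (r : ℕ) (hr : 1 ≤ r)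
    (P : Polynomial ℤ) (hmonic : P.Monic)
    (hmin : ∀ Q : Polynomial ℤ, Annihilates Q a ↔ P ∣ Q)
    (hirr : Irreducible (P.map (Int.castRingHom ℚ)))
    (hdeg : P.natDegree = r)
    (α : ℕ → ℂ)
    (hroot : ∀ i, i < r → (Polynomial.aeval (α i)) P = 0)
    (hinj : Set.InjOn α (Set.Iio r))
    (α₁ : ℝ) (hα₁ : α 0 = (α₁ : ℂ)) (hα₁gt : 1 < α₁)
    (hdom : ∀ i, 1 ≤ i → i < r → ‖α i‖ < α₁) :
    ∀ s₀ : ℂ,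
      Set.Finite {k : ℕ → ℕ | (∀ i, k (i + 1) ≤ k i) ∧ (∀ i, r - 1 ≤ i → k i = 0) ∧
        Complex.exp ((s₀ + (k 0 : ℂ)) * (Real.log α₁ : ℂ)) =
          ∏ i ∈ Finset.range (r - 1), α (i + 1) ^ (k i - k (i + 1))} :=
  finitely_many_tuples_per_pole_general r α α₁ hα₁gt hdom
end

section
/- Under the main setting, every point of the pole set S lies in the closed left half-plane: if s ∈ S then Re(s) ≤ 0, with Re(s) = 0 occurring exactly for the tuples with k_1 = ⋯ = k_{r−1} = 0 (giving the points s = 2πin/log α_1, n ∈ ℤ). -/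
open Polynomial Real

/-!
Taking absolute values in `exp((s + k₁) log α₁) = α₂^(k₁-k₂) ⋯ α_r^(k_{r-1})` gives
`α₁^(Re s + k₁) = ∏ |α_{i+1}|^(k_i - k_{i+1})`. The exponents telescope to `k₁`, so dominance
`|α_i| < α₁` bounds the right-hand side by `α₁^k₁`, strictly unless `k₁ = 0`. Hence `Re s ≤ 0`,
with equality only when all `k_i` vanish; then `exp(s log α₁) = 1`, which pins `s` to the lattice
`(2πi/log α₁) ℤ`.
-/

lemma sum_range_tsub_succ_of_antitone {k : ℕ → ℕ} (hk : Antitone k) (m : ℕ) :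
    ∑ i ∈ Finset.range m, (k i - k (i + 1)) = k 0 - k m := by
  induction m with
  | zero => simp
  | succ m ih =>
    have h₁ : k (m + 1) ≤ k m := hk m.le_succ
    have h₂ : k m ≤ k 0 := hk m.zero_le
    rw [Finset.sum_range_succ, ih]
    omega

section ProdPow

variable {ι : Type*} {s : Finset ι} {b : ι → ℝ} {c : ℝ} {e : ι → ℕ}

lemma prod_pow_lt_pow_sum (hb : ∀ i ∈ s, 0 ≤ b i) (hbc : ∀ i ∈ s, b i < c)
    (he : ∑ i ∈ s, e i ≠ 0) : ∏ i ∈ s, b i ^ e i < c ^ ∑ i ∈ s, e i := by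
  obtain ⟨j, hj, hej⟩ := Finset.exists_ne_zero_of_sum_ne_zero he
  have hc : 0 < c := (hb j hj).trans_lt (hbc j hj)
  by_cases hpos : ∀ i ∈ s, 0 < b i ^ e i
  · rw [← Finset.prod_pow_eq_pow_sum]
    exact Finset.prod_lt_prod hpos (fun i hi => pow_le_pow_left₀ (hb i hi) (hbc i hi).le _)
      ⟨j, hj, pow_lt_pow_left₀ (hbc j hj) (hb j hj) hej⟩
  · push Not at hpos
    obtain ⟨i, hi, hzero⟩ := hpos
    rw [Finset.prod_eq_zero hi (hzero.antisymm (pow_nonneg (hb i hi) _))]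
    positivity

end ProdPow

section ExpMulLog

variable {c : ℝ} {s : ℂ}

lemma norm_exp_add_natCast_mul_log (hc : 0 < c) (n : ℕ) :
    ‖Complex.exp ((s + n) * Real.log c)‖ = Real.exp (s.re * Real.log c) * c ^ n := by
  rw [Complex.norm_exp, ← Real.rpow_natCast, Real.rpow_def_of_pos hc, ← Real.exp_add,
    Complex.re_mul_ofReal, Complex.add_re, Complex.natCast_re, add_mul, mul_comm (n : ℝ)]

lemma re_neg_of_norm_exp_lt (hc : 1 < c) {n : ℕ}
    (h : ‖Complex.exp ((s + n) * Real.log c)‖ < c ^ n) : s.re < 0 := by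
  rw [norm_exp_add_natCast_mul_log (by linarith), mul_lt_iff_lt_one_left (by positivity),
    Real.exp_lt_one_iff] at h
  exact neg_of_mul_neg_left h (Real.log_pos hc).le

lemma exists_int_eq_of_exp_mul_log_eq_one (hc : 1 < c) (h : Complex.exp (s * Real.log c) = 1) :
    ∃ n : ℤ, s = 2 * π * Complex.I * n / Real.log c := by
  obtain ⟨n, hn⟩ := Complex.exp_eq_one_iff.mp h
  have hlog : (Real.log c : ℂ) ≠ 0 := Complex.ofReal_ne_zero.mpr (Real.log_pos hc).ne'
  exact ⟨n, by rw [eq_div_iff hlog, hn]; ring⟩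

end ExpMulLog

theorem poles_in_left_half_plane_general
    (r : ℕ)
    (α : ℕ → ℂ)
    (α₁ : ℝ) (hα₁gt : 1 < α₁)
    (hdom : ∀ i, 1 ≤ i → i < r → ‖α i‖ < α₁) :
    ∀ s : ℂ, ∀ k : ℕ → ℕ,
      (∀ i, k (i + 1) ≤ k i) → (∀ i, r - 1 ≤ i → k i = 0) →
      Complex.exp ((s + (k 0 : ℂ)) * (Real.log α₁ : ℂ)) =
        ∏ i ∈ Finset.range (r - 1), α (i + 1) ^ (k i - k (i + 1)) →
      s.re ≤ 0 ∧ (s.re = 0 ↔ ∀ i, k i = 0) ∧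
        (s.re = 0 → ∃ n : ℤ, s = 2 * (π : ℂ) * Complex.I * (n : ℂ) / (Real.log α₁ : ℂ)) := by
  intro s k hk hzero heq
  have hanti : Antitone k := antitone_nat_of_succ_le hk
  have hsum : ∑ i ∈ Finset.range (r - 1), (k i - k (i + 1)) = k 0 := by
    rw [sum_range_tsub_succ_of_antitone hanti, hzero _ le_rfl, tsub_zero]
  have hnorm : ‖Complex.exp ((s + (k 0 : ℂ)) * (Real.log α₁ : ℂ))‖ =
      ∏ i ∈ Finset.range (r - 1), ‖α (i + 1)‖ ^ (k i - k (i + 1)) := by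
    rw [heq, norm_prod]
    simp only [norm_pow]
  have hbound : ∀ i ∈ Finset.range (r - 1), ‖α (i + 1)‖ < α₁ := fun i hi =>
    hdom (i + 1) (Nat.le_add_left 1 i) (by rw [Finset.mem_range] at hi; omega)
  by_cases hk0 : k 0 = 0
  · have hall : ∀ i, k i = 0 := fun i => Nat.eq_zero_of_le_zero (hk0 ▸ hanti i.zero_le)
    obtain ⟨n, hn⟩ : ∃ n : ℤ, s = 2 * (π : ℂ) * Complex.I * (n : ℂ) / (Real.log α₁ : ℂ) := by
      refine exists_int_eq_of_exp_mul_log_eq_one hα₁gt ?_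
      simpa [hall] using heq
    have hre : s.re = 0 := by simp [hn]
    exact ⟨hre.le, iff_of_true hre hall, fun _ => ⟨n, hn⟩⟩
  · have hlt : s.re < 0 := by
      refine re_neg_of_norm_exp_lt hα₁gt (n := k 0) ?_
      rw [hnorm, ← hsum]
      exact prod_pow_lt_pow_sum (fun i _ => norm_nonneg _) hbound (hsum ▸ hk0)
    exact ⟨hlt.le, iff_of_false hlt.ne (fun h => hk0 (h 0)), fun h => absurd h hlt.ne⟩

/-- Under the main setting, each point of the pole set has real part `≤ 0`, with real part `= 0`
occurring exactly for the tuples with `k₁ = ⋯ = k_{r-1} = 0`, which give the points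
`s = 2πin/log α₁`, `n ∈ ℤ`. -/
theorem poles_in_left_half_plane
    (a : ℕ → ℤ) (r : ℕ) (hr : 1 ≤ r)
    (P : Polynomial ℤ) (hmonic : P.Monic)
    (hmin : ∀ Q : Polynomial ℤ, Annihilates Q a ↔ P ∣ Q)
    (hirr : Irreducible (P.map (Int.castRingHom ℚ)))
    (hdeg : P.natDegree = r)
    (α : ℕ → ℂ)
    (hroot : ∀ i, i < r → (Polynomial.aeval (α i)) P = 0)
    (hinj : Set.InjOn α (Set.Iio r))
    (α₁ : ℝ) (hα₁ : α 0 = (α₁ : ℂ)) (hα₁gt : 1 < α₁)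
    (hdom : ∀ i, 1 ≤ i → i < r → ‖α i‖ < α₁) :
    ∀ s : ℂ, ∀ k : ℕ → ℕ,
      (∀ i, k (i + 1) ≤ k i) → (∀ i, r - 1 ≤ i → k i = 0) →
      Complex.exp ((s + (k 0 : ℂ)) * (Real.log α₁ : ℂ)) =
        ∏ i ∈ Finset.range (r - 1), α (i + 1) ^ (k i - k (i + 1)) →
      s.re ≤ 0 ∧ (s.re = 0 ↔ ∀ i, k i = 0) ∧
        (s.re = 0 → ∃ n : ℤ, s = 2 * (π : ℂ) * Complex.I * (n : ℂ) / (Real.log α₁ : ℂ)) :=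
  poles_in_left_half_plane_general r α α₁ hα₁gt hdom
end

section
/- Under the main setting, let m ∈ ℕ and suppose that ∏_{i=1}^r α_i^{β_i} ≠ 1 for every multi-index β ∈ ℕ^r with β_1 + ⋯ + β_r = m. Then the complex number ∑_{β ∈ ℕ^r, β_1+⋯+β_r = m} (m!/(β_1!⋯β_r!)) · (∏_{i=1}^r λ_i^{β_i}) · (∏_{i=1}^r α_i^{β_i}) / (1 − ∏_{i=1}^r α_i^{β_i}) is a rational number (it lies in the image of ℚ in ℂ). In particular, the value of the meromorphic continuation of ∑ a(n)^{−s} at s = −m, when −m is not a pole, is rational. -/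
open Polynomial

/-!
Every automorphism `σ` of the splitting field `K ⊆ ℂ` of `P` permutes the roots `α i`. The
coefficients `lam i` also lie in `K`: they are the unique solution of the Vandermonde system
`∑ i, lam i * α i ^ n = a n` (`1 ≤ n ≤ r`), whose right-hand side is rational, so `σ` permutes
them along with the roots. The multinomial sum is invariant under simultaneous permutation of the
pairs `(α i, lam i)`, hence fixed by `Gal(K/ℚ)`, hence rational.
-/

open Finset Function

section

variable {F L G : Type*} [Field F] [Field L] [FunLike G F L] [RingHomClass G F L] {r : ℕ}

def weightedPowerSums (v c : Fin r → F) (n : Fin r) : F :=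
  ∑ i, c i * v i ^ ((n : ℕ) + 1)

theorem weightedPowerSums_eq_vecMul (v : Fin r → F) :
    weightedPowerSums v = fun c => Matrix.vecMul c (Matrix.diagonal v * Matrix.vandermonde v) := by
  funext c n
  simp [weightedPowerSums, Matrix.vecMul, dotProduct, Matrix.diagonal_mul, pow_succ']

theorem weightedPowerSums_bijective {v : Fin r → F} (hv : Injective v) (hv0 : ∀ i, v i ≠ 0) :
    Bijective (weightedPowerSums v) := by
  have hunit : IsUnit (Matrix.diagonal v * Matrix.vandermonde v) := by
    rw [Matrix.isUnit_iff_isUnit_det, Matrix.det_mul, Matrix.det_diagonal, isUnit_iff_ne_zero]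
    exact mul_ne_zero (prod_ne_zero_iff.2 fun i _ => hv0 i) (Matrix.det_vandermonde_ne_zero_iff.2 hv)
  rw [weightedPowerSums_eq_vecMul]
  exact ⟨Matrix.vecMul_injective_iff_isUnit.2 hunit, Matrix.vecMul_surjective_iff_isUnit.2 hunit⟩

theorem weightedPowerSums_comp_perm (v c : Fin r → F) (π : Equiv.Perm (Fin r)) :
    weightedPowerSums (v ∘ π) (c ∘ π) = weightedPowerSums v c := by
  funext n
  exact Equiv.sum_comp π fun i => c i * v i ^ ((n : ℕ) + 1)

theorem map_weightedPowerSums (f : G) (v c : Fin r → F) (n : Fin r) :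
    f (weightedPowerSums v c n) = weightedPowerSums (f ∘ v) (f ∘ c) n := by
  simp [weightedPowerSums]

/-- The value at `s = -m` of the continuation of `∑ n, a(n) ^ (-s)` for `a(n) = ∑ i, c i * α i ^ n`,
obtained by expanding `a(n) ^ m` multinomially and summing the geometric series in `n`. -/
def zetaAtNeg (m : ℕ) (α c : Fin r → F) : F :=
  ∑ β ∈ Nat.antidiagonalTuple r m,
    ((m.factorial : F) / ∏ i, ((β i).factorial : F)) * (∏ i, c i ^ β i) *
      (∏ i, α i ^ β i) / (1 - ∏ i, α i ^ β i)

theorem map_zetaAtNeg (f : G) (m : ℕ) (α c : Fin r → F) :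
    f (zetaAtNeg m α c) = zetaAtNeg m (f ∘ α) (f ∘ c) := by
  simp [zetaAtNeg]

theorem zetaAtNeg_comp_perm (m : ℕ) (α c : Fin r → F) (π : Equiv.Perm (Fin r)) :
    zetaAtNeg m (α ∘ π) (c ∘ π) = zetaAtNeg m α c := by
  have hprod : ∀ (x : Fin r → F) (β : Fin r → ℕ),
      ∏ i, x (π i) ^ β i = ∏ i, x i ^ β (π.symm i) := fun x β =>
    Fintype.prod_equiv π _ _ fun i => by simp
  have hfact : ∀ β : Fin r → ℕ,
      ∏ i, ((β i).factorial : F) = ∏ i, ((β (π.symm i)).factorial : F) := fun β =>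
    Fintype.prod_equiv π _ _ fun i => by simp
  refine sum_nbij' (· ∘ π.symm) (· ∘ π) ?_ ?_ ?_ ?_ fun β _ => ?_
  · intro β hβ
    simpa only [mem_coe, Nat.mem_antidiagonalTuple, comp_apply, Equiv.sum_comp] using hβ
  · intro β hβ
    simpa only [mem_coe, Nat.mem_antidiagonalTuple, comp_apply, Equiv.sum_comp] using hβ
  · intro β _
    simp [Function.comp_assoc]
  · intro β _
    simp [Function.comp_assoc]
  · simp only [comp_apply]
    rw [hprod α, hprod c, hfact]

end

theorem Polynomial.ne_zero_of_aeval_eq_zero_of_irreducible {F A : Type*} [Field F] [CommRing A]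
    [Nontrivial A] [Algebra F A] {p : F[X]} (hp : Irreducible p) {x y : A}
    (hx : aeval x p = 0) (hy : aeval y p = 0) (hy0 : y ≠ 0) : x ≠ 0 := by
  rintro rfl
  have hXp : X ∣ p := X_dvd_iff.2 <| (algebraMap F A).injective <| by
    rw [coeff_zero_eq_aeval_zero', hx, map_zero]
  obtain ⟨d, hd⟩ := irreducible_X.dvd_symm hp hXp
  exact hy0 (by simpa [hy] using congrArg (aeval y) hd)

section Galois

theorem Function.Injective.exists_perm_comp_eq {ι X : Type*} [Finite ι] {v : ι → X}
    (hv : Injective v) {g : X → X} (hg : Injective g) (h : ∀ i, ∃ j, v j = g (v i)) :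
    ∃ π : Equiv.Perm ι, v ∘ π = g ∘ v := by
  choose f hf using h
  have hf_inj : Injective f := fun i j hij => hv (hg (by rw [← hf, ← hf, hij]))
  exact ⟨Equiv.ofBijective f (Finite.injective_iff_bijective.1 hf_inj), funext hf⟩

theorem Polynomial.exists_eq_of_isRoot {K : Type*} [Field K] {q : K[X]} {r : ℕ} (hq : q ≠ 0)
    (hdeg : q.natDegree ≤ r) {v : Fin r → K} (hv : Injective v) (hroot : ∀ i, q.IsRoot (v i))
    {x : K} (hx : q.IsRoot x) : ∃ i, v i = x := by
  classical
  have hsub : univ.image v ⊆ q.roots.toFinset := fun y hy => by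
    obtain ⟨i, -, rfl⟩ := mem_image.1 hy
    exact Multiset.mem_toFinset.2 ((mem_roots hq).2 (hroot i))
  have hcard : q.roots.toFinset.card ≤ (univ.image v).card := calc
    q.roots.toFinset.card ≤ Multiset.card q.roots := Multiset.toFinset_card_le _
    _ ≤ q.natDegree := card_roots' q
    _ ≤ (univ.image v).card := by simpa [card_image_of_injective _ hv] using hdeg
  have hxmem : x ∈ univ.image v := by
    rw [eq_of_subset_of_card_le hsub hcard]
    exact Multiset.mem_toFinset.2 ((mem_roots hq).2 hx)
  simpa using hxmem

variable {F K : Type*} [Field F] [Field K] [Algebra F K] {r : ℕ}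

theorem Polynomial.exists_eq_algEquiv_apply {p : F[X]} (hp : p ≠ 0) (hdeg : p.natDegree ≤ r)
    {v : Fin r → K} (hv : Injective v) (hroot : ∀ i, aeval (v i) p = 0) (σ : Gal(K/F))
    (i : Fin r) : ∃ j, v j = σ (v i) := by
  have hroot' : ∀ x : K, aeval x p = 0 → (p.map (algebraMap F K)).IsRoot x := fun x hx => by
    rwa [IsRoot, eval_map_algebraMap]
  refine exists_eq_of_isRoot ((Polynomial.map_ne_zero_iff (algebraMap F K).injective).2 hp)
    (natDegree_map_le.trans hdeg) hv (fun j => hroot' _ (hroot j)) (hroot' _ ?_)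
  rw [aeval_algEquiv, AlgHom.comp_apply, hroot i, map_zero]

theorem IsGalois.zetaAtNeg_mem_range_algebraMap [FiniteDimensional F K] [IsGalois F K]
    {v c : Fin r → K} (hv : Injective v) (hv0 : ∀ i, v i ≠ 0)
    (hperm : ∀ (σ : Gal(K/F)) i, ∃ j, v j = σ (v i))
    (hc : ∀ n, weightedPowerSums v c n ∈ Set.range (algebraMap F K)) (m : ℕ) :
    zetaAtNeg m v c ∈ Set.range (algebraMap F K) := by
  rw [IsGalois.mem_range_algebraMap_iff_fixed]
  intro σ
  obtain ⟨π, hπ⟩ := hv.exists_perm_comp_eq σ.injective (hperm σ)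
  have hσc : σ ∘ c = c ∘ π := by
    apply (weightedPowerSums_bijective (σ.injective.comp hv) fun i => by simpa using hv0 i).1
    funext n
    rw [← map_weightedPowerSums, (IsGalois.mem_range_algebraMap_iff_fixed _).1 (hc n), ← hπ,
      weightedPowerSums_comp_perm]
  rw [map_zetaAtNeg, hσc, ← hπ, zetaAtNeg_comp_perm]

theorem zetaAtNeg_mem_range_algebraMap {L : Type*} [Field L] [Algebra F L] {p : F[X]}
    (hp : p.Separable) (hsplit : (p.map (algebraMap F L)).Splits) (hdeg : p.natDegree ≤ r)
    {v c : Fin r → L} (hv : Injective v) (hv0 : ∀ i, v i ≠ 0) (hroot : ∀ i, aeval (v i) p = 0)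
    (hc : ∀ n, weightedPowerSums v c n ∈ Set.range (algebraMap F L)) (m : ℕ) :
    zetaAtNeg m v c ∈ Set.range (algebraMap F L) := by
  let K := IntermediateField.adjoin F (p.rootSet L)
  have : p.IsSplittingField F K := IntermediateField.adjoin_rootSet_isSplittingField hsplit
  have : FiniteDimensional F K := IsSplittingField.finiteDimensional K p
  have : IsGalois F K := IsGalois.of_separable_splitting_field hp
  let vK : Fin r → K := fun i =>
    ⟨v i, IntermediateField.subset_adjoin _ _ (mem_rootSet.2 ⟨hp.ne_zero, hroot i⟩)⟩
  have hvK : Injective vK := fun i j hij => hv (congrArg (algebraMap K L) hij)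
  have hvK0 (i : Fin r) : vK i ≠ 0 := fun h => hv0 i (congrArg (algebraMap K L) h)
  have hvKroot (i : Fin r) : aeval (vK i) p = 0 :=
    (algebraMap K L).injective (by rw [← aeval_algebraMap_apply, map_zero]; exact hroot i)
  choose w hw using hc
  obtain ⟨cK, hcK⟩ := (weightedPowerSums_bijective hvK hvK0).2 (algebraMap F K ∘ w)
  have hcKc : algebraMap K L ∘ cK = c := by
    apply (weightedPowerSums_bijective hv hv0).1
    funext n
    change weightedPowerSums (algebraMap K L ∘ vK) _ n = _
    rw [← map_weightedPowerSums, hcK, comp_apply, ← IsScalarTower.algebraMap_apply, hw]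
  obtain ⟨q, hq⟩ := IsGalois.zetaAtNeg_mem_range_algebraMap hvK hvK0
    (exists_eq_algEquiv_apply hp.ne_zero hdeg hvK hvKroot) (fun n => ⟨w n, by rw [hcK]; rfl⟩) m
  exact ⟨q, by rw [IsScalarTower.algebraMap_apply F K L, hq, map_zetaAtNeg, ← hcKc]; rfl⟩

end Galois

theorem value_at_negative_integer_rational_general
    (a : ℕ → ℤ) (r : ℕ)
    (P : Polynomial ℤ)
    (hirr : Irreducible (P.map (Int.castRingHom ℚ)))
    (hdeg : P.natDegree = r)
    (α : ℕ → ℂ)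
    (hroot : ∀ i, i < r → (Polynomial.aeval (α i)) P = 0)
    (hinj : Set.InjOn α (Set.Iio r))
    (α₁ : ℝ) (hα₁ : α 0 = (α₁ : ℂ)) (hα₁gt : 1 < α₁)
    (lam : ℕ → ℂ)
    (hbinet : ∀ n : ℕ, 1 ≤ n → (a n : ℂ) = ∑ i ∈ Finset.range r, lam i * α i ^ n)
    (m : ℕ) :
    ∃ q : ℚ,
      (∑ β ∈ Finset.Nat.antidiagonalTuple r m,
        ((Nat.factorial m : ℂ) / ∏ i : Fin r, (Nat.factorial (β i) : ℂ)) *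
          (∏ i : Fin r, lam (i : ℕ) ^ β i) *
          (∏ i : Fin r, α (i : ℕ) ^ β i) / (1 - ∏ i : Fin r, α (i : ℕ) ^ β i)) = (q : ℂ) := by
  set p := P.map (Int.castRingHom ℚ)
  have hproot (i : ℕ) (hi : i < r) : aeval (α i) p = 0 := by
    simpa only [p, ← algebraMap_int_eq, aeval_map_algebraMap] using hroot i hi
  have hα0 (i : Fin r) : α i ≠ 0 :=
    ne_zero_of_aeval_eq_zero_of_irreducible hirr (hproot i i.2) (hproot 0 i.pos)
      (by rw [hα₁]; exact_mod_cast (zero_lt_one.trans hα₁gt).ne')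
  have hsums (n : Fin r) : weightedPowerSums (fun i : Fin r => α i) (fun i => lam i) n =
      algebraMap ℚ ℂ (a (n + 1)) := by
    rw [map_intCast, hbinet _ (Nat.le_add_left 1 n), sum_range]
    rfl
  obtain ⟨q, hq⟩ := zetaAtNeg_mem_range_algebraMap hirr.separable (IsAlgClosed.splits _)
    (natDegree_map_le.trans hdeg.le) (fun i j hij => Fin.ext (hinj i.2 j.2 hij)) hα0
    (fun i => hproot i i.2) (fun n => ⟨_, (hsums n).symm⟩) m
  exact ⟨q, by rw [← eq_ratCast (algebraMap ℚ ℂ), hq]; rfl⟩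

/-- Under the main setting, if `α^β ≠ 1` for every multi-index `β` with `|β| = m`, then the
multinomial sum `∑_{|β| = m} (m!/(β₁!⋯β_r!)) · λ^β · α^β / (1 - α^β)` — the value at `s = -m`
of the meromorphic continuation of `∑_{n≥1} a(n)^{-s}` when `-m` is not a pole — is a rational
number. -/
theorem value_at_negative_integer_rational
    (a : ℕ → ℤ) (r : ℕ) (hr : 1 ≤ r)
    (P : Polynomial ℤ) (hmonic : P.Monic)
    (hmin : ∀ Q : Polynomial ℤ, Annihilates Q a ↔ P ∣ Q)
    (hirr : Irreducible (P.map (Int.castRingHom ℚ)))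
    (hdeg : P.natDegree = r)
    (α : ℕ → ℂ)
    (hroot : ∀ i, i < r → (Polynomial.aeval (α i)) P = 0)
    (hinj : Set.InjOn α (Set.Iio r))
    (α₁ : ℝ) (hα₁ : α 0 = (α₁ : ℂ)) (hα₁gt : 1 < α₁)
    (hdom : ∀ i, 1 ≤ i → i < r → ‖α i‖ < α₁)
    (lam : ℕ → ℂ) (hlam : ∀ i, i < r → lam i ≠ 0)
    (l₁ : ℝ) (hl₁ : lam 0 = (l₁ : ℂ)) (hl₁pos : 0 < l₁)
    (hbinet : ∀ n : ℕ, 1 ≤ n → (a n : ℂ) = ∑ i ∈ Finset.range r, lam i * α i ^ n)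
    (hmono : ∀ n : ℕ, 1 ≤ n → a n < a (n + 1))
    (hpos : ∀ n : ℕ, 1 ≤ n → 1 ≤ a n)
    (m : ℕ)
    (hnotpole : ∀ β : Fin r → ℕ, (∑ i, β i) = m → (∏ i : Fin r, α (i : ℕ) ^ β i) ≠ 1) :
    ∃ q : ℚ,
      (∑ β ∈ Finset.Nat.antidiagonalTuple r m,
        ((Nat.factorial m : ℂ) / ∏ i : Fin r, (Nat.factorial (β i) : ℂ)) *
          (∏ i : Fin r, lam (i : ℕ) ^ β i) *
          (∏ i : Fin r, α (i : ℕ) ^ β i) / (1 - ∏ i : Fin r, α (i : ℕ) ^ β i)) = (q : ℂ) :=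
  value_at_negative_integer_rational_general a r P hirr hdeg α hroot hinj α₁ hα₁ hα₁gt lam hbinet m
end

section
/- Let z ∈ ℂ be a nonreal root of X³ − X² − X − 1 (i.e. z³ = z² + z + 1 and z ∉ ℝ). Then z/|z| is not a root of unity: there is no integer n ≥ 1 with (z/|z|)^n = 1. Consequently the argument θ of z is not a rational multiple of π. -/
/-!
Reducing modulo the Tribonacci relation writes `z ^ n = a + b z + c z²` with integers `a, b, c`.
If `(z / |z|) ^ n = 1` then `z ^ n` is real, and the imaginary part gives `b + 2 c Re z = 0`.
But `Re z` is a root of `4x³ - 4x² + 1`, which has no rational root, so `b = c = 0` and `z ^ n = a`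
is an integer of modulus `|z| ^ n ∈ (0, 1)`, which is absurd. An argument `qπ` with `q` rational
would make `z / |z|` a `2 · den q`-th root of unity.
-/

open Real

theorem exists_pow_eq_intCast_add_mul_add_mul_sq {R : Type*} [CommRing R] {w : R}
    (hw : w ^ 3 = w ^ 2 + w + 1) (n : ℕ) :
    ∃ a b c : ℤ, w ^ n = a + b * w + c * w ^ 2 := by
  induction n with
  | zero => exact ⟨1, 0, 0, by simp⟩
  | succ n ih =>
    obtain ⟨a, b, c, h⟩ := ih
    exact ⟨c, a + c, b + c, by rw [pow_succ, h]; push_cast; linear_combination (c : R) * hw⟩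

theorem Rat.four_mul_pow_three_sub_four_mul_sq_add_one_ne_zero (r : ℚ) :
    4 * r ^ 3 - 4 * r ^ 2 + 1 ≠ 0 := by
  intro hr
  set n := r.num
  set d : ℤ := (r.den : ℤ)
  have key : 4 * n ^ 3 - 4 * n ^ 2 * d + d ^ 3 = 0 := by
    have : (4 * n ^ 3 - 4 * n ^ 2 * d + d ^ 3 : ℚ) = 0 := by
      rw [← Rat.mul_den_eq_num]
      linear_combination (r.den : ℚ) ^ 3 * hr
    exact_mod_cast this
  obtain ⟨e, he⟩ : 2 ∣ d :=
    Int.prime_two.dvd_of_dvd_pow (n := 3) ⟨2 * n ^ 2 * d - 2 * n ^ 3, by linarith⟩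
  have hn : 2 ∣ n := Int.prime_two.dvd_of_dvd_pow (n := 3)
    ⟨n ^ 2 * e - e ^ 3, by rw [he] at key; linarith⟩
  have hcop : IsCoprime n d := Int.isCoprime_iff_gcd_eq_one.mpr r.reduced
  exact absurd (hcop.isUnit_of_dvd' hn ⟨e, he⟩) (by norm_num [Int.isUnit_iff])

theorem irrational_of_four_mul_pow_three_sub_four_mul_sq_add_one_eq_zero {x : ℝ}
    (hx : 4 * x ^ 3 - 4 * x ^ 2 + 1 = 0) : Irrational x := by
  rintro ⟨r, rfl⟩
  exact r.four_mul_pow_three_sub_four_mul_sq_add_one_ne_zero (by exact_mod_cast hx)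

section TribonacciRoot

variable {z : ℂ} (hz : z ^ 3 = z ^ 2 + z + 1) (him : z.im ≠ 0)
include hz him

theorem tribonacci_root_im_sq : z.im ^ 2 = 3 * z.re ^ 2 - 2 * z.re - 1 := by
  have h := congrArg Complex.im hz
  simp only [pow_succ, pow_zero, one_mul, Complex.mul_im, Complex.mul_re, Complex.add_im,
    Complex.one_im] at h
  have : z.im * (z.im ^ 2 - (3 * z.re ^ 2 - 2 * z.re - 1)) = 0 := by linear_combination -h
  exact sub_eq_zero.mp ((mul_eq_zero.mp this).resolve_left him)

theorem tribonacci_root_re_cubic : 4 * z.re ^ 3 - 4 * z.re ^ 2 + 1 = 0 := by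
  have h := congrArg Complex.re hz
  simp only [pow_succ, pow_zero, one_mul, Complex.mul_im, Complex.mul_re, Complex.add_re,
    Complex.one_re] at h
  linear_combination (-1 / 2) * h + (1 - 3 * z.re) / 2 * tribonacci_root_im_sq hz him

theorem tribonacci_root_norm_lt_one : ‖z‖ < 1 := by
  have hy := tribonacci_root_im_sq hz him
  have hx := tribonacci_root_re_cubic hz him
  have hy0 : 0 < z.im ^ 2 := by positivity
  -- `-1/2 < Re z < -1/3`, and `|z|² = 4 (Re z)² - 2 Re z - 1`
  have : ‖z‖ ^ 2 < 1 := by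
    rw [Complex.sq_norm, Complex.normSq_apply]
    nlinarith [sq_nonneg (2 * z.re + 1), sq_nonneg (3 * z.re + 1)]
  nlinarith [norm_nonneg z]

theorem tribonacci_root_im_pow_ne_zero {n : ℕ} (hn : 1 ≤ n) : (z ^ n).im ≠ 0 := by
  intro hzn
  obtain ⟨a, b, c, h⟩ := exists_pow_eq_intCast_add_mul_add_mul_sq hz n
  have hlin : b + 2 * c * z.re = 0 := by
    have him_pow := congrArg Complex.im h
    simp only [hzn, pow_two, Complex.add_im, Complex.mul_im, Complex.mul_re, Complex.intCast_re,
      Complex.intCast_im, zero_mul, add_zero, zero_add] at him_pow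
    have : z.im * (b + 2 * c * z.re) = 0 := by linear_combination -him_pow
    exact (mul_eq_zero.mp this).resolve_left him
  have hc : c = 0 := by
    by_contra hc
    have hirr := ((irrational_of_four_mul_pow_three_sub_four_mul_sq_add_one_eq_zero
      (tribonacci_root_re_cubic hz him)).intCast_mul (mul_ne_zero two_ne_zero hc)).intCast_add b
    exact hirr.ne_zero (by push_cast; linear_combination hlin)
  have hb : b = 0 := by simpa [hc] using hlin
  have hnorm : ‖z‖ ^ n = |(a : ℝ)| := by
    rw [← norm_pow, h, hb, hc]
    simp
  have hpos : 0 < ‖z‖ ^ n := pow_pos (norm_pos_iff.mpr fun h0 => him (by simp [h0])) n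
  have hlt : ‖z‖ ^ n < 1 := pow_lt_one₀ (norm_nonneg z) (tribonacci_root_norm_lt_one hz him)
    (by omega)
  rw [hnorm, ← Int.cast_abs] at hpos hlt
  have : (0 : ℤ) < |a| := by exact_mod_cast hpos
  have : |a| < 1 := by exact_mod_cast hlt
  omega

end TribonacciRoot

namespace Complex

theorem div_norm_pow_two_mul_den_eq_one {z : ℂ} (hz : z ≠ 0) {q : ℚ}
    (h : z.arg = q * π) : (z / ‖z‖) ^ (2 * q.den) = 1 := by
  have hexp : exp (z.arg * I) = z / ‖z‖ :=
    (eq_div_iff (by simpa using hz)).mpr (by rw [mul_comm]; exact norm_mul_exp_arg_mul_I z)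
  rw [← hexp, ← exp_nat_mul, h]
  convert exp_int_mul_two_pi_mul_I q.num using 2
  push_cast
  rw [Rat.cast_def]
  field_simp

end Complex

/-- If `z` is a nonreal root of the Tribonacci polynomial `X³ - X² - X - 1`, then `z/|z|` is not
a root of unity, and consequently the argument of `z` is not a rational multiple of `π`. -/
theorem tribonacci_root_not_root_of_unity (z : ℂ)
    (hz : z ^ 3 = z ^ 2 + z + 1)
    (hnotreal : ¬ ∃ x : ℝ, z = (x : ℂ)) :
    (∀ n : ℕ, 1 ≤ n → (z / (‖z‖ : ℂ)) ^ n ≠ 1) ∧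
    (∀ q : ℚ, z.arg ≠ (q : ℝ) * π) := by
  have him : z.im ≠ 0 := fun h => hnotreal ⟨z.re, Complex.ext rfl (by simpa using h)⟩
  have hz0 : z ≠ 0 := fun h => him (by simp [h])
  have hunit (n : ℕ) (hn : 1 ≤ n) : (z / (‖z‖ : ℂ)) ^ n ≠ 1 := by
    rw [div_pow, Ne, div_eq_one_iff_eq (pow_ne_zero n (by simpa using hz0))]
    intro hzn
    apply tribonacci_root_im_pow_ne_zero hz him hn
    rw [hzn, ← Complex.ofReal_pow, Complex.ofReal_im]
  exact ⟨hunit, fun q hq => hunit _ (Nat.one_le_iff_ne_zero.mpr (by positivity))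
    (Complex.div_norm_pow_two_mul_den_eq_one hz0 hq)⟩
end

section
/- For every integer N ≥ 2, the N-bonacci polynomial P_N = X^N − X^{N−1} − X^{N−2} − ⋯ − X − 1 is irreducible in ℚ[X]. -/
open Polynomial Finset

noncomputable def Complex.abs : AbsoluteValue ℂ ℝ := NormedField.toAbsoluteValue ℂ

lemma Complex.abs_apply' (z : ℂ) : Complex.abs z = ‖z‖ := rfl

lemma Complex.sq_abs (z : ℂ) : Complex.abs z ^ 2 = Complex.normSq z := Complex.sq_norm z

lemma Complex.abs_ofReal (x : ℝ) : Complex.abs (x : ℂ) = |x| := by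
  simp [Complex.abs_apply']


lemma nat_ineq1 (N : ℕ) (hN : 2 ≤ N) : N * 5 ^ (N + 1) < 8 ^ (N + 1) := by
  induction N with
  | zero => norm_num
  | succ n ih =>
    rcases Nat.lt_or_ge n 2 with h | h
    · interval_cases n <;> norm_num
    · have H := ih (by omega)
      have h5 : 0 < 5 ^ (n + 1) := Nat.pow_pos (by norm_num)
      calc (n + 1) * 5 ^ (n + 1 + 1) = 5 * ((n + 1) * 5 ^ (n + 1)) := by ring
        _ ≤ 8 * (n * 5 ^ (n + 1)) := by nlinarith
        _ < 8 * 8 ^ (n + 1) := by omega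
        _ = 8 ^ (n + 1 + 1) := by ring

lemma nat_ineq2 (N : ℕ) (hN : 2 ≤ N) : (N + 1) * 5 ^ N < 2 * 8 ^ N := by
  induction N with
  | zero => norm_num
  | succ n ih =>
    rcases Nat.lt_or_ge n 2 with h | h
    · interval_cases n <;> norm_num
    · have H := ih (by omega)
      have h5 : 0 < 5 ^ n := Nat.pow_pos (by norm_num)
      calc (n + 1 + 1) * 5 ^ (n + 1) = 5 * ((n + 2) * 5 ^ n) := by ring
        _ ≤ 8 * ((n + 1) * 5 ^ n) := by nlinarith
        _ < 8 * (2 * 8 ^ n) := by omega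
        _ = 2 * 8 ^ (n + 1) := by ring

lemma real_ineq1 (N : ℕ) (hN : 2 ≤ N) : (N : ℝ) < (8 / 5) ^ (N + 1) := by
  have h := nat_ineq1 N hN
  have h' : (N : ℝ) * 5 ^ (N + 1) < 8 ^ (N + 1) := by exact_mod_cast h
  have h5 : (0:ℝ) < 5 ^ (N + 1) := by positivity
  rw [div_pow, lt_div_iff₀ h5]
  linarith

lemma real_ineq2 (N : ℕ) (hN : 2 ≤ N) : ((N : ℝ) + 1) < 2 * (8 / 5) ^ N := by
  have h := nat_ineq2 N hN
  have h' : ((N : ℝ) + 1) * 5 ^ N < 2 * 8 ^ N := by exact_mod_cast h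
  have h5 : (0:ℝ) < 5 ^ N := by positivity
  rw [div_pow]
  rw [show (2:ℝ) * (8 ^ N / 5 ^ N) = (2 * 8 ^ N) / 5 ^ N by ring, lt_div_iff₀ h5]
  linarith



lemma root_eq (N : ℕ) (z : ℂ) (hz : z ^ N = ∑ j ∈ Finset.range N, z ^ j) :
    z ^ N * (2 - z) = 1 := by
  have h2 : (∑ j ∈ Finset.range N, z ^ j) * (z - 1) = z ^ N - 1 := geom_sum_mul z N
  linear_combination (1 - z) * hz - h2

lemma root_ne_one (N : ℕ) (hN : 2 ≤ N) (z : ℂ)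
    (hz : z ^ N = ∑ j ∈ Finset.range N, z ^ j) : z ≠ 1 := by
  rintro rfl
  simp at hz
  have : N = 1 := by exact_mod_cast hz.symm
  omega

lemma abs_ne_one (N : ℕ) (z : ℂ) (heq : z ^ N * (2 - z) = 1) (hne : z ≠ 1) :
    Complex.abs z ≠ 1 := by
  intro h1
  have h2 : Complex.abs (2 - z) = 1 := by
    have h := congrArg Complex.abs heq
    simp only [map_mul, map_pow, h1, one_pow, one_mul, map_one] at h
    exact h
  apply hne
  have e1 : Complex.normSq z = 1 := by
    rw [← Complex.sq_abs, h1]; norm_num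
  have e2 : Complex.normSq (2 - z) = 1 := by
    rw [← Complex.sq_abs, h2]; norm_num
  rw [Complex.normSq_apply] at e1
  rw [Complex.normSq_apply] at e2
  simp only [Complex.sub_re, Complex.sub_im, Complex.re_ofNat, Complex.im_ofNat] at e2
  have hre : z.re = 1 := by nlinarith
  have him : z.im = 0 := by nlinarith
  exact Complex.ext (by simp [hre]) (by simp [him])

lemma lemA (N : ℕ) (hN : 2 ≤ N) (z : ℂ) (heq : z ^ N * (2 - z) = 1)
    (h1 : 1 < Complex.abs z) :
    8 / 5 < Complex.abs z ∧ Complex.abs (2 - z) < 2 / 5 := by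
  set r := Complex.abs z with hr
  set t := Complex.abs (2 - z) with ht
  have hrt : r ^ N * t = 1 := by
    have h := congrArg Complex.abs heq
    simpa [map_mul, map_pow] using h
  have hrN : 1 < r ^ N := one_lt_pow₀ h1 (by omega)
  have ht0 : 0 ≤ t := Complex.abs.nonneg _
  have ht1 : t < 1 := by nlinarith
  have htri : 2 ≤ r + t := by
    have : Complex.abs (z + (2 - z)) ≤ r + t := Complex.abs.add_le _ _
    simpa [Complex.abs_apply'] using this
  have hr2 : r ^ 2 ≤ r ^ N := pow_le_pow_right₀ h1.le hN
  have key : t * (2 - t) ^ 2 ≤ 1 := by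
    have h2t : 2 - t ≤ r := by linarith
    have hsq : (2 - t) ^ 2 ≤ r ^ 2 := by nlinarith
    nlinarith
  have htb : t < 2 / 5 := by
    by_contra hc
    push_neg at hc
    have hprod : (0:ℝ) ≤ (t - 2/5) * (1 - t) := by nlinarith
    nlinarith
  exact ⟨by linarith, htb⟩


lemma uniq (N : ℕ) (hN : 2 ≤ N) (z₁ z₂ : ℂ)
    (h₁ : z₁ ^ N * (2 - z₁) = 1) (h₂ : z₂ ^ N * (2 - z₂) = 1)
    (ha₁ : 8 / 5 < Complex.abs z₁) (ha₂ : 8 / 5 < Complex.abs z₂) : z₁ = z₂ := by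
  by_contra hne
  set G : ℂ := ∑ j ∈ Finset.range N, z₂ ^ j * z₁ ^ (N - 1 - j) with hG
  have hGm : G * (z₂ - z₁) = z₂ ^ N - z₁ ^ N := geom_sum₂_mul z₂ z₁ N
  have key : (z₂ - z₁) * (z₁ ^ N * z₂ ^ N - G) = 0 := by
    linear_combination z₂ ^ N * h₁ - z₁ ^ N * h₂ - hGm
  have hzz : z₂ - z₁ ≠ 0 := sub_ne_zero.mpr (Ne.symm hne)
  have hGe : z₁ ^ N * z₂ ^ N = G := by
    have h := (mul_eq_zero.mp key).resolve_left hzz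
    have := sub_eq_zero.mp h
    exact this
  set a₁ := Complex.abs z₁ with ha1d
  set a₂ := Complex.abs z₂ with ha2d
  have ha₁0 : (0:ℝ) < a₁ := by linarith
  have ha₂0 : (0:ℝ) < a₂ := by linarith
  have hP : (0:ℝ) < a₁ ^ N * a₂ ^ N := by positivity
  have habs : a₁ ^ N * a₂ ^ N = Complex.abs G := by
    rw [← map_pow, ← map_pow, ← map_mul, hGe]
  have hsum : Complex.abs G ≤ ∑ j ∈ Finset.range N, a₂ ^ j * a₁ ^ (N - 1 - j) := by
    rw [hG]
    refine le_trans (Complex.abs.sum_le _ _) (le_of_eq ?_)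
    apply Finset.sum_congr rfl
    intro j _
    rw [map_mul, map_pow, map_pow]
  have hterm : ∀ j ∈ Finset.range N,
      (8/5:ℝ) ^ (N+1) * (a₂ ^ j * a₁ ^ (N - 1 - j)) ≤ a₁ ^ N * a₂ ^ N := by
    intro j hj
    have hjN : j < N := Finset.mem_range.mp hj
    have e1 : a₁ ^ N = a₁ ^ (N - 1 - j) * a₁ ^ (j + 1) := by
      rw [← pow_add]; congr 1; omega
    have e2 : a₂ ^ N = a₂ ^ j * a₂ ^ (N - j) := by
      rw [← pow_add]; congr 1; omega
    have e3 : (8/5:ℝ) ^ (N+1) = (8/5:ℝ) ^ (j+1) * (8/5:ℝ) ^ (N - j) := by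
      rw [← pow_add]; congr 1; omega
    have b1 : (8/5:ℝ) ^ (j+1) ≤ a₁ ^ (j+1) := pow_le_pow_left₀ (by norm_num) ha₁.le _
    have b2 : (8/5:ℝ) ^ (N-j) ≤ a₂ ^ (N-j) := pow_le_pow_left₀ (by norm_num) ha₂.le _
    have hb : (8/5:ℝ) ^ (N+1) ≤ a₁ ^ (j+1) * a₂ ^ (N - j) := by
      rw [e3]
      have : (0:ℝ) ≤ (8/5:ℝ)^(j+1) := by positivity
      exact mul_le_mul b1 b2 (by positivity) (by positivity)
    have hpos : (0:ℝ) ≤ a₂ ^ j * a₁ ^ (N - 1 - j) := by positivity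
    calc (8/5:ℝ) ^ (N+1) * (a₂ ^ j * a₁ ^ (N - 1 - j))
        ≤ (a₁ ^ (j+1) * a₂ ^ (N - j)) * (a₂ ^ j * a₁ ^ (N - 1 - j)) :=
          mul_le_mul_of_nonneg_right hb hpos
      _ = a₁ ^ N * a₂ ^ N := by rw [e1, e2]; ring
  have htotal : (8/5:ℝ) ^ (N+1) * (a₁ ^ N * a₂ ^ N) ≤ N * (a₁ ^ N * a₂ ^ N) := by
    calc (8/5:ℝ) ^ (N+1) * (a₁ ^ N * a₂ ^ N)
        = (8/5:ℝ) ^ (N+1) * Complex.abs G := by rw [habs]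
      _ ≤ (8/5:ℝ) ^ (N+1) * ∑ j ∈ Finset.range N, a₂ ^ j * a₁ ^ (N - 1 - j) := by
          apply mul_le_mul_of_nonneg_left hsum (by positivity)
      _ = ∑ j ∈ Finset.range N, (8/5:ℝ) ^ (N+1) * (a₂ ^ j * a₁ ^ (N - 1 - j)) := by
          rw [Finset.mul_sum]
      _ ≤ ∑ _j ∈ Finset.range N, a₁ ^ N * a₂ ^ N := Finset.sum_le_sum hterm
      _ = N * (a₁ ^ N * a₂ ^ N) := by rw [Finset.sum_const, Finset.card_range]; ring
  have : (8/5:ℝ) ^ (N+1) ≤ N := le_of_mul_le_mul_right htotal hP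
  have := real_ineq1 N hN
  linarith

lemma no_double (N : ℕ) (hN : 2 ≤ N) (u : ℂ) (heq : u ^ N * (2 - u) = 1)
    (habs : 8 / 5 < Complex.abs u)
    (hd : ((N:ℂ) + 1) * u ^ N = 2 * N * u ^ (N - 1)) : False := by
  have hu0 : u ≠ 0 := by
    intro h; rw [h] at habs; simp at habs; linarith
  have hfac : u ^ N = u ^ (N - 1) * u := by
    rw [← pow_succ]; congr 1; omega
  have hup : u ^ (N - 1) ≠ 0 := pow_ne_zero _ hu0
  have hzero : (((N:ℂ) + 1) * u - 2 * N) * u ^ (N - 1) = 0 := by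
    linear_combination hd - ((N:ℂ) + 1) * hfac
  have hND : ((N:ℂ) + 1) * u = 2 * N := by
    have := (mul_eq_zero.mp hzero).resolve_right hup
    linear_combination this
  have hN1 : ((N:ℝ) + 1) ≠ 0 := by positivity
  have hN1c : ((N:ℂ) + 1) ≠ 0 := by
    intro h
    have : ((N:ℝ) + 1) = 0 := by exact_mod_cast congrArg Complex.re h
    exact hN1 this
  have hu : u = (((2 * N / (N + 1) : ℝ)) : ℂ) := by
    push_cast
    field_simp
    linear_combination hND
  have habsu : Complex.abs u = 2 * N / ((N:ℝ) + 1) := by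
    rw [hu, Complex.abs_ofReal, abs_of_nonneg (by positivity)]
  have h2u : Complex.abs (2 - u) = 2 / ((N:ℝ) + 1) := by
    have : 2 - u = (((2 / (N + 1) : ℝ)) : ℂ) := by
      rw [hu]; push_cast; field_simp; ring
    rw [this, Complex.abs_ofReal, abs_of_nonneg (by positivity)]
  have habseq : (Complex.abs u) ^ N * Complex.abs (2 - u) = 1 := by
    have h := congrArg Complex.abs heq
    simpa [map_mul, map_pow] using h
  rw [habsu, h2u] at habseq
  have hpow : ((8:ℝ)/5) ^ N < (2 * N / ((N:ℝ) + 1)) ^ N := by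
    apply pow_lt_pow_left₀ (by rw [← habsu]; exact habs) (by norm_num)
    omega
  have hfrac : (0:ℝ) < 2 / ((N:ℝ) + 1) := by positivity
  have h2 := real_ineq2 N hN
  have : (1:ℝ) < (2 * N / ((N:ℝ) + 1)) ^ N * (2 / ((N:ℝ) + 1)) := by
    calc (1:ℝ) < (8/5) ^ N * (2 / ((N:ℝ) + 1)) := by
          rw [show (8/5:ℝ)^N * (2/((N:ℝ)+1)) = 2*(8/5)^N / ((N:ℝ)+1) by ring,
            lt_div_iff₀ (by positivity)]
          linarith
      _ ≤ (2 * N / ((N:ℝ) + 1)) ^ N * (2 / ((N:ℝ) + 1)) := by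
          apply mul_le_mul_of_nonneg_right hpow.le hfrac.le
  linarith [habseq]




-- multiset product lemmas
lemma ms_prod_le_one (s : Multiset ℝ) (h : ∀ x ∈ s, 0 ≤ x ∧ x ≤ 1) :
    0 ≤ s.prod ∧ s.prod ≤ 1 := by
  induction s using Multiset.induction with
  | empty => simp
  | cons a t ih =>
    have ha := h a (Multiset.mem_cons_self a t)
    have iht := ih (fun x hx => h x (Multiset.mem_cons_of_mem hx))
    simp only [Multiset.prod_cons]
    constructor
    · exact mul_nonneg ha.1 iht.1
    · calc a * t.prod ≤ 1 * 1 := mul_le_mul ha.2 iht.2 iht.1 (by norm_num)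
        _ = 1 := by norm_num

lemma ms_prod_lt_one (s : Multiset ℝ) (h : ∀ x ∈ s, 0 ≤ x ∧ x < 1) (hne : s ≠ 0) :
    s.prod < 1 := by
  obtain ⟨a, ha⟩ := Multiset.exists_mem_of_ne_zero hne
  obtain ⟨t, rfl⟩ : ∃ t, s = a ::ₘ t := ⟨s.erase a, (Multiset.cons_erase ha).symm⟩
  have ha' := h a (Multiset.mem_cons_self a t)
  have ht := ms_prod_le_one t (fun x hx => ⟨(h x (Multiset.mem_cons_of_mem hx)).1,
    (h x (Multiset.mem_cons_of_mem hx)).2.le⟩)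
  rw [Multiset.prod_cons]
  calc a * t.prod ≤ a * 1 := mul_le_mul_of_nonneg_left ht.2 ha'.1
    _ = a := mul_one a
    _ < 1 := ha'.2

-- abs of eval at 0 for a monic complex polynomial with all roots small
lemma small_eval_zero (B : Polynomial ℂ) (hB : B.Monic) (hd : 1 ≤ B.natDegree)
    (hroots : ∀ z ∈ B.roots, Complex.abs z < 1) : Complex.abs (B.eval 0) < 1 := by
  have hsp : B.Splits := IsAlgClosed.splits B
  have hprod : B = (B.roots.map fun a => X - C a).prod :=
    hsp.eq_prod_roots_of_monic hB
  have hcard : B.roots.card = B.natDegree := (splits_iff_card_roots.mp hsp)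
  have heval : B.eval 0 = (B.roots.map fun a => -a).prod := by
    conv_lhs => rw [hprod]
    rw [eval_multiset_prod, Multiset.map_map]
    congr 1
    apply Multiset.map_congr rfl
    intro x _
    simp
  have habs : Complex.abs (B.eval 0) = ((B.roots.map fun a => -a).map Complex.abs).prod := by
    rw [heval]
    exact map_multiset_prod Complex.abs _
  rw [habs, Multiset.map_map]
  apply ms_prod_lt_one
  · intro x hx
    obtain ⟨z, hz, rfl⟩ := Multiset.mem_map.mp hx
    simp only [Function.comp_apply, map_neg_eq_map]
    exact ⟨Complex.abs.nonneg z, hroots z hz⟩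
  · intro h0
    have : B.roots.card = 0 := by
      have := congrArg Multiset.card h0
      simpa using this
    omega

section core
variable (N : ℕ) (hN : 2 ≤ N)

-- the integer polynomial
noncomputable def T (N : ℕ) : Polynomial ℤ := X ^ N - ∑ j ∈ Finset.range N, X ^ j

lemma core (hN : 2 ≤ N) (a b : Polynomial ℤ) (ha : a.Monic) (hb : b.Monic)
    (hda : 1 ≤ a.natDegree) (hdb : 1 ≤ b.natDegree)
    (hab : T N = a * b) : False := by
  set φ : ℤ →+* ℂ := Int.castRingHom ℂ with hφ
  set A : Polynomial ℂ := a.map φ with hA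
  set B : Polynomial ℂ := b.map φ with hB
  set P : Polynomial ℂ := (T N).map φ with hP
  have hPC : P = X ^ N - ∑ j ∈ Finset.range N, X ^ j := by
    simp [hP, T, Polynomial.map_sub, Polynomial.map_pow, Polynomial.map_sum]
  have hPAB : P = A * B := by rw [hP, hab, Polynomial.map_mul]
  have hAm : A.Monic := ha.map φ
  have hBm : B.Monic := hb.map φ
  have hAd : A.natDegree = a.natDegree := ha.natDegree_map φ
  have hBd : B.natDegree = b.natDegree := hb.natDegree_map φ
  -- root facts
  have hroot : ∀ z : ℂ, P.eval z = 0 → z ^ N = ∑ j ∈ Finset.range N, z ^ j := by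
    intro z hz
    rw [hPC] at hz
    simp only [eval_sub, eval_pow, eval_X, eval_finset_sum] at hz
    exact sub_eq_zero.mp hz
  -- properties of roots of P
  have hProotP : ∀ z : ℂ, P.eval z = 0 → z ^ N * (2 - z) = 1 ∧ Complex.abs z ≠ 1 := by
    intro z hz
    have h1 := hroot z hz
    have h2 := root_eq N z h1
    exact ⟨h2, abs_ne_one N z h2 (root_ne_one N hN z h1)⟩
  have hAne : A ≠ 0 := hAm.ne_zero
  have hBne : B ≠ 0 := hBm.ne_zero
  -- roots of factors are roots of P
  have hArootP : ∀ z ∈ A.roots, P.eval z = 0 := by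
    intro z hz
    have := isRoot_of_mem_roots hz
    rw [hPAB]
    simp [eval_mul, this.eq_zero]
  have hBrootP : ∀ z ∈ B.roots, P.eval z = 0 := by
    intro z hz
    have := isRoot_of_mem_roots hz
    rw [hPAB]
    simp [eval_mul, this.eq_zero]
  -- small factor contradiction
  have hsmall : ∀ (c d : Polynomial ℤ), T N = c * d → d.Monic → 1 ≤ d.natDegree →
      (∀ z ∈ (d.map φ).roots, P.eval z = 0) →
      ¬ (∃ z ∈ (d.map φ).roots, 1 < Complex.abs z) → False := by
    intro c d hcd hdm hdd hdroot hnb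
    push_neg at hnb
    have hall : ∀ z ∈ (d.map φ).roots, Complex.abs z < 1 := by
      intro z hz
      have h1 := hnb z hz
      have h2 := (hProotP z (hdroot z hz)).2
      exact lt_of_le_of_ne h1 h2
    have hlt := small_eval_zero (d.map φ) (hdm.map φ)
      (by rw [hdm.natDegree_map φ]; exact hdd) hall
    -- eval 0 of d over ℤ is a unit
    have hT0 : (T N).eval 0 = -1 := by
      simp only [T, eval_sub, eval_pow, eval_X, eval_finset_sum]
      rw [zero_pow (by omega), Finset.sum_eq_single_of_mem 0 (Finset.mem_range.mpr (by omega))]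
      · norm_num
      · intro j _ hj; exact zero_pow hj
    have hcd0 : c.eval 0 * d.eval 0 = -1 := by
      rw [← eval_mul, ← hcd, hT0]
    have hunit : d.eval 0 = 1 ∨ d.eval 0 = -1 := by
      have h1 : d.eval 0 ∣ -1 := Dvd.intro_left _ hcd0
      have := Int.isUnit_iff.mp (isUnit_of_dvd_unit h1 (by norm_num))
      exact this
    have heval0 : (d.map φ).eval 0 = φ (d.eval 0) := by
      rw [Polynomial.eval_map, Polynomial.eval₂_at_zero, Polynomial.coeff_zero_eq_eval_zero]
    rw [heval0] at hlt
    rcases hunit with h | h <;> rw [h] at hlt <;> simp [hφ] at hlt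
  by_cases hEA : ∃ z ∈ A.roots, 1 < Complex.abs z
  · by_cases hEB : ∃ z ∈ B.roots, 1 < Complex.abs z
    · -- double root case
      obtain ⟨u, huA, hua⟩ := hEA
      obtain ⟨v, hvB, hva⟩ := hEB
      have hueq := (hProotP u (hArootP u huA)).1
      have hveq := (hProotP v (hBrootP v hvB)).1
      have hu8 := (lemA N hN u hueq hua).1
      have hv8 := (lemA N hN v hveq hva).1
      have huv : u = v := uniq N hN u v hueq hveq hu8 hv8
      subst huv
      -- (X - C u)^2 divides P
      have hdA : (X - C u) ∣ A := dvd_iff_isRoot.mpr (isRoot_of_mem_roots huA)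
      have hdB : (X - C u) ∣ B := dvd_iff_isRoot.mpr (isRoot_of_mem_roots hvB)
      have hsq : (X - C u) ^ 2 ∣ P := by
        rw [hPAB, sq]
        exact mul_dvd_mul hdA hdB
      obtain ⟨q, hq⟩ := hsq
      have hderiv0 : (derivative P).eval u = 0 := by
        rw [hq]
        simp [derivative_mul, derivative_pow, eval_add, eval_mul, eval_pow, eval_sub]
      have hP0 : P.eval u = 0 := hArootP u huA
      -- polynomial identity F = (X-1)*P
      have hgeom : (∑ i ∈ Finset.range N, (X:Polynomial ℂ) ^ i) * (X - 1) = X ^ N - 1 :=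
        geom_sum_mul X N
      have hF : (X - 1) * P = X ^ (N + 1) - 2 * X ^ N + 1 := by
        rw [hPC]
        linear_combination (-1 : Polynomial ℂ) * hgeom
      have hFd := congrArg (fun p => eval u (derivative p)) hF
      simp only [derivative_mul, derivative_sub, derivative_add, derivative_X_pow,
        derivative_one, derivative_X, derivative_ofNat, eval_add, eval_sub, eval_mul,
        eval_pow, eval_X, eval_one, eval_natCast, eval_C, eval_zero, one_mul, mul_one,
        mul_zero, add_zero, zero_mul, hP0, hderiv0] at hFd
      simp only [Nat.add_sub_cancel, eval_ofNat] at hFd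
      push_cast at hFd
      exact no_double N hN u hueq hu8 (by linear_combination -hFd)
    · exact hsmall a b hab hb hdb hBrootP hEB
  · exact hsmall b a (by rw [hab, mul_comm]) ha hda hArootP hEA

end core

lemma sum_deg (N : ℕ) (hN : 2 ≤ N) :
    (∑ j ∈ Finset.range N, (X : Polynomial ℤ) ^ j).degree < (N : WithBot ℕ) := by
  apply lt_of_le_of_lt (degree_sum_le _ _)
  rw [Finset.sup_lt_iff (by exact_mod_cast WithBot.bot_lt_coe N)]
  intro j hj
  rw [degree_X_pow]
  exact_mod_cast Finset.mem_range.mp hj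

lemma T_monic (N : ℕ) (hN : 2 ≤ N) : (T N).Monic :=
  monic_X_pow_sub (sum_deg N hN)

lemma T_natDegree (N : ℕ) (hN : 2 ≤ N) : (T N).natDegree = N := by
  have h : (T N).degree = N := by
    rw [T, degree_sub_eq_left_of_degree_lt]
    · exact degree_X_pow N
    · rw [degree_X_pow]; exact sum_deg N hN
  exact natDegree_eq_of_degree_eq_some h

lemma T_irred (N : ℕ) (hN : 2 ≤ N) : Irreducible (T N) := by
  constructor
  · intro hu
    have := natDegree_eq_zero_of_isUnit hu
    rw [T_natDegree N hN] at this
    omega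
  · intro a b hab
    by_contra hcon
    push_neg at hcon
    obtain ⟨hua, hub⟩ := hcon
    have hTne : T N ≠ 0 := (T_monic N hN).ne_zero
    have hane : a ≠ 0 := by rintro rfl; simp at hab; exact hTne hab
    have hbne : b ≠ 0 := by rintro rfl; simp at hab; exact hTne hab
    have hl : a.leadingCoeff * b.leadingCoeff = 1 := by
      rw [← leadingCoeff_mul, ← hab]
      exact T_monic N hN
    have hda : 1 ≤ a.natDegree := by
      rcases Nat.eq_zero_or_pos a.natDegree with h0 | h1
      · exfalso
        apply hua
        rw [Polynomial.eq_C_of_natDegree_eq_zero h0]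
        apply Polynomial.isUnit_C.mpr
        have : a.coeff 0 = a.leadingCoeff := by
          rw [Polynomial.leadingCoeff, h0]
        rw [this]
        exact IsUnit.of_mul_eq_one _ hl
      · exact h1
    have hdb : 1 ≤ b.natDegree := by
      rcases Nat.eq_zero_or_pos b.natDegree with h0 | h1
      · exfalso
        apply hub
        rw [Polynomial.eq_C_of_natDegree_eq_zero h0]
        apply Polynomial.isUnit_C.mpr
        have : b.coeff 0 = b.leadingCoeff := by
          rw [Polynomial.leadingCoeff, h0]
        rw [this]
        exact IsUnit.of_mul_eq_one _ (by rw [mul_comm]; exact hl)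
      · exact h1
    rcases Int.mul_eq_one_iff_eq_one_or_neg_one.mp hl with ⟨h1, h2⟩ | ⟨h1, h2⟩
    · exact core N hN a b h1 h2 hda hdb hab
    · refine core N hN (-a) (-b) ?_ ?_ ?_ ?_ ?_
      · rw [Monic, leadingCoeff_neg, h1]; norm_num
      · rw [Monic, leadingCoeff_neg, h2]; norm_num
      · rwa [natDegree_neg]
      · rwa [natDegree_neg]
      · rw [neg_mul_neg]; exact hab

/-- For every `N ≥ 2`, the `N`-bonacci polynomial `X^N - X^{N-1} - ⋯ - X - 1` is irreducible
in `ℚ[X]`. -/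
theorem nbonacci_irreducible (N : ℕ) (hN : 2 ≤ N) :
    Irreducible ((X ^ N - ∑ j ∈ Finset.range N, X ^ j : Polynomial ℚ)) := by
  have hmap : (T N).map (Int.castRingHom ℚ) =
      (X ^ N - ∑ j ∈ Finset.range N, X ^ j : Polynomial ℚ) := by
    simp [T, Polynomial.map_sub, Polynomial.map_pow, Polynomial.map_sum]
  have h := (IsPrimitive.Int.irreducible_iff_irreducible_map_cast
    (T_monic N hN).isPrimitive).mp (T_irred N hN)
  rwa [hmap] at h
end

section
/- For every integer N ≥ 2, the N-bonacci polynomial P_N = X^N − X^{N−1} − ⋯ − X − 1 has exactly one real root φ_N with φ_N > 1; this root satisfies 1 < φ_N < 2, and every complex root z of P_N with z ≠ φ_N satisfies |z| < 1 (so φ_N is the dominant root). -/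
/-!
Multiplying the root equation `z ^ N = ∑_{j<N} z ^ j` by `1 - z` turns it into
`z ^ N * (2 - z) = 1`. For real `t > 0` the root equation says `∑_{k=1}^{N} t⁻ᵏ = 1`, whose left
side is strictly decreasing, so there is at most one positive real root; the intermediate value
theorem on `[1, 2]` provides one. For a complex root with `‖z‖ = t ≥ 1`, the triangle inequality
gives `t ^ N ≤ ∑_{j<N} t ^ j`, i.e. `t ^ N * (2 - t) ≥ 1 = t ^ N * ‖2 - z‖ ≥ t ^ N * (2 - t)`.
Hence `‖z‖ + ‖2 - z‖ = 2`, which forces `z` onto the segment `[0, 2]`, i.e. `z` is the positive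
real root.
-/

open Finset

lemma pow_mul_two_sub_eq_one_of_pow_eq_geom_sum {R : Type*} [CommRing R] {x : R} {N : ℕ}
    (h : x ^ N = ∑ j ∈ range N, x ^ j) : x ^ N * (2 - x) = 1 := by
  linear_combination (1 - x) * h - geom_sum_mul x N

lemma one_le_pow_mul_two_sub_of_pow_le_geom_sum {R : Type*} [CommRing R] [LinearOrder R]
    [IsStrictOrderedRing R] {t : R} {N : ℕ} (ht : 1 ≤ t) (h : t ^ N ≤ ∑ j ∈ range N, t ^ j) :
    1 ≤ t ^ N * (2 - t) := by
  nlinarith [mul_le_mul_of_nonneg_right h (sub_nonneg.mpr ht), geom_sum_mul t N]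

lemma pow_mul_geom_sum_lt {R : Type*} [CommSemiring R] [LinearOrder R] [IsStrictOrderedRing R]
    {x y : R} {N : ℕ} (hN : 0 < N) (hx : 0 < x) (hxy : x < y) :
    x ^ N * ∑ j ∈ range N, y ^ j < y ^ N * ∑ j ∈ range N, x ^ j := by
  rw [mul_sum, mul_sum]
  refine sum_lt_sum_of_nonempty (nonempty_range_iff.mpr hN.ne') fun j hj => ?_
  have hjN : j ≤ N := (mem_range.mp hj).le
  have hpow : x ^ (N - j) < y ^ (N - j) :=
    pow_lt_pow_left₀ hxy hx.le (Nat.sub_ne_zero_of_lt (mem_range.mp hj))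
  calc x ^ N * y ^ j = x ^ (N - j) * (x ^ j * y ^ j) := by rw [← pow_mul_pow_sub x hjN]; ring
    _ < y ^ (N - j) * (x ^ j * y ^ j) :=
      mul_lt_mul_of_pos_right hpow (mul_pos (pow_pos hx j) (pow_pos (hx.trans hxy) j))
    _ = y ^ N * x ^ j := by rw [← pow_mul_pow_sub y hjN]; ring

lemma eq_of_pow_eq_geom_sum {R : Type*} [CommSemiring R] [LinearOrder R] [IsStrictOrderedRing R]
    {x y : R} {N : ℕ} (hx : 0 < x) (hy : 0 < y)
    (hxN : x ^ N = ∑ j ∈ range N, x ^ j) (hyN : y ^ N = ∑ j ∈ range N, y ^ j) : x = y := by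
  have hN : 0 < N := Nat.pos_of_ne_zero fun h => by simp [h] at hxN
  have key {a b : R} (ha : 0 < a) (hab : a < b) (haN : a ^ N = ∑ j ∈ range N, a ^ j)
      (hbN : b ^ N = ∑ j ∈ range N, b ^ j) : False := by
    have := pow_mul_geom_sum_lt hN ha hab
    rw [← haN, ← hbN, mul_comm] at this
    exact this.false
  rcases lt_trichotomy x y with hxy | hxy | hxy
  · exact (key hx hxy hxN hyN).elim
  · exact hxy
  · exact (key hy hxy hyN hxN).elim

lemma exists_pow_eq_geom_sum_mem_Ioo {N : ℕ} (hN : 2 ≤ N) :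
    ∃ φ ∈ Set.Ioo (1 : ℝ) 2, φ ^ N = ∑ j ∈ range N, φ ^ j := by
  set f : ℝ → ℝ := fun t => t ^ N - ∑ j ∈ range N, t ^ j
  have hf : Continuous f := by fun_prop
  have hf1 : f 1 < 0 := by
    have : (2 : ℝ) ≤ N := by exact_mod_cast hN
    simp only [f, one_pow, sum_const, card_range, nsmul_eq_mul, mul_one]
    linarith
  have hf2 : 0 < f 2 := by
    have := geom_sum_mul (2 : ℝ) N
    simp only [f]
    norm_num at this
    linarith
  obtain ⟨φ, hφ, hφ0⟩ := intermediate_value_Ioo one_le_two hf.continuousOn ⟨hf1, hf2⟩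
  exact ⟨φ, hφ, sub_eq_zero.mp hφ0⟩

lemma Complex.eq_norm_of_norm_add_norm_sub_eq {z : ℂ} {r : ℝ} (h : ‖z‖ + ‖r - z‖ = r) :
    z = ‖z‖ := by
  have hr : 0 ≤ r := h ▸ add_nonneg (norm_nonneg _) (norm_nonneg _)
  have hray : SameRay ℝ z (r - z) := by
    rw [sameRay_iff_norm_add, add_sub_cancel, Complex.norm_real, Real.norm_of_nonneg hr, h]
  obtain ⟨a, -, ha, -, -, hza, -⟩ := hray.exists_eq_smul_add
  rw [add_sub_cancel, Complex.real_smul, ← Complex.ofReal_mul] at hza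
  rw [hza, Complex.norm_real, Real.norm_of_nonneg (mul_nonneg ha hr)]

lemma Complex.eq_norm_of_pow_eq_geom_sum {z : ℂ} {N : ℕ} (hz : 1 ≤ ‖z‖)
    (hzN : z ^ N = ∑ j ∈ range N, z ^ j) : z = ‖z‖ := by
  set t := ‖z‖
  have htN : 0 < t ^ N := pow_pos (zero_lt_one.trans_le hz) N
  have hle : t ^ N ≤ ∑ j ∈ range N, t ^ j := by
    simpa only [t, ← norm_pow, hzN] using norm_sum_le (range N) (z ^ ·)
  have hlower : 1 ≤ t ^ N * (2 - t) := one_le_pow_mul_two_sub_of_pow_le_geom_sum hz hle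
  have hunit : t ^ N * ‖2 - z‖ = 1 := by
    simpa only [norm_mul, norm_pow, norm_one] using
      congrArg norm (pow_mul_two_sub_eq_one_of_pow_eq_geom_sum hzN)
  have hsub : 2 - t ≤ ‖2 - z‖ := by
    simpa using norm_sub_norm_le (2 : ℂ) z
  have : ‖2 - z‖ = 2 - t := by
    nlinarith [mul_le_mul_of_nonneg_left hsub htN.le]
  exact Complex.eq_norm_of_norm_add_norm_sub_eq (r := 2) (by push_cast; linarith)

/-- For every `N ≥ 2`, the `N`-bonacci polynomial `X^N - X^{N-1} - ⋯ - X - 1` has exactly one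
real root `φ > 1`; it satisfies `1 < φ < 2`, and every other complex root has modulus `< 1`. -/
theorem nbonacci_dominant_root (N : ℕ) (hN : 2 ≤ N) :
    ∃ φ : ℝ, 1 < φ ∧ φ < 2 ∧
      φ ^ N = ∑ j ∈ Finset.range N, φ ^ j ∧
      (∀ x : ℝ, 1 < x → x ^ N = ∑ j ∈ Finset.range N, x ^ j → x = φ) ∧
      (∀ z : ℂ, z ^ N = ∑ j ∈ Finset.range N, z ^ j → z ≠ (φ : ℂ) → ‖z‖ < 1) := by
  obtain ⟨φ, ⟨hφ1, hφ2⟩, hφN⟩ := exists_pow_eq_geom_sum_mem_Ioo hN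
  have hφ0 : 0 < φ := zero_lt_one.trans hφ1
  refine ⟨φ, hφ1, hφ2, hφN, fun x hx hxN => eq_of_pow_eq_geom_sum (by linarith) hφ0 hxN hφN, ?_⟩
  intro z hzN hzφ
  by_contra! hz
  have hz_real := Complex.eq_norm_of_pow_eq_geom_sum hz hzN
  have hnormN : ‖z‖ ^ N = ∑ j ∈ range N, ‖z‖ ^ j := by
    rw [hz_real] at hzN
    exact_mod_cast hzN
  exact hzφ (hz_real.trans (congrArg _ (eq_of_pow_eq_geom_sum (by linarith) hφ0 hnormN hφN)))
end
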